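/- arXiv:1507.02000 — 7 statements merged into one kernel-verified Lean document; each statement's English description precedes it below -/
import Mathlib

section
/- Theorem 2.2(b) (PDG for problems that need not be strongly convex): Suppose μ ≥ 0 and L_f > 0, and run the PDG iteration with the parameters τ_t = (t−1)/2, η_t = 4L_f/t, and α_t = (t−1)/t for t = 1, …, k. Let θ_t = t and x̄^k = (Σ_{t=1}^k θ_t)^{-1} Σ_{t=1}^k θ_t x^t = (2/(k(k+1))) Σ_{t=1}^k t·x^t. Then for every k ≥ 1 and every optimal solution x* of min_{x∈X} Ψ(x), one has Ψ(x̄^k) − Ψ(x*) ≤ (8L_f/(k(k+1))) · P(x^0, x*). -/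
open scoped RealInnerProductSpace

/-
Let y_t be the θ-weighted average x̄^t of x^1, …, x^t. With these parameters the lower point is
x̲^{t+1} = (t y_t + 2 x^t)/(t + 2), so y_{t+1} − x̲^{t+1} = 2/(t+2) · (x^{t+1} − x^t), and PDG is an
accelerated gradient method. The descent lemma at x̲^{t+1}, convexity of f at y_t and at x*,
convexity of h + μω and the three-point inequality of the prox step show that the energy
t(t+1)/2 · (Ψ(y_t) − Ψ(x*)) + 4L_f P(x^t, x*) does not increase. It starts at 4L_f P(x^0, x*),
and P ≥ 0.
-/

section

open Set

variable {F : Type*} [NormedAddCommGroup F] [InnerProductSpace ℝ F]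

theorem le_add_deriv_add_of_deriv_sub_le_mul {φ φ' : ℝ → ℝ} {c : ℝ}
    (hφ : ∀ r ∈ Icc (0 : ℝ) 1, HasDerivAt φ (φ' r) r)
    (hc : ∀ r ∈ Ico (0 : ℝ) 1, φ' r - φ' 0 ≤ c * r) :
    φ 1 ≤ φ 0 + φ' 0 + c / 2 := by
  have hB (r : ℝ) :
      HasDerivAt (fun r => φ 0 + r * φ' 0 + c / 2 * r ^ 2) (φ' 0 + c * r) r :=
    ((((hasDerivAt_id' r).mul_const (φ' 0)).const_add (φ 0)).add
      ((hasDerivAt_pow 2 r).const_mul (c / 2))).congr_deriv (by push_cast; ring)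
  have := image_le_of_deriv_right_le_deriv_boundary
    (fun r hr => (hφ r hr).continuousAt.continuousWithinAt)
    (fun r hr => (hφ r (Ico_subset_Icc_self hr)).hasDerivWithinAt)
    (B := fun r => φ 0 + r * φ' 0 + c / 2 * r ^ 2) (by simp)
    (fun r _ => (hB r).continuousAt.continuousWithinAt)
    (fun r _ => (hB r).hasDerivWithinAt)
    (fun r hr => by linarith [hc r hr]) (right_mem_Icc.2 zero_le_one)
  simpa using this

theorem add_deriv_add_le_of_mul_le_deriv_sub {φ φ' : ℝ → ℝ} {c : ℝ}
    (hφ : ∀ r ∈ Icc (0 : ℝ) 1, HasDerivAt φ (φ' r) r)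
    (hc : ∀ r ∈ Ico (0 : ℝ) 1, c * r ≤ φ' r - φ' 0) :
    φ 0 + φ' 0 + c / 2 ≤ φ 1 := by
  have := le_add_deriv_add_of_deriv_sub_le_mul (φ := -φ) (φ' := -φ') (c := -c)
    (fun r hr => (hφ r hr).neg) (fun r hr => by simp only [Pi.neg_apply]; linarith [hc r hr])
  simp only [Pi.neg_apply] at this
  linarith

theorem convexOn_of_add_inner_le {s : Set F} (hs : Convex ℝ s) {f : F → ℝ} {f' : F → F}
    (hf : ∀ a ∈ s, ∀ b ∈ s, f a + ⟪f' a, b - a⟫ ≤ f b) : ConvexOn ℝ s f := by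
  refine ⟨hs, fun a ha b hb θ ϑ hθ hϑ hθϑ => ?_⟩
  set c := θ • a + ϑ • b
  have hc : c ∈ s := hs ha hb hθ hϑ hθϑ
  have hzero : θ * ⟪f' c, a - c⟫ + ϑ * ⟪f' c, b - c⟫ = 0 := by
    rw [← real_inner_smul_right, ← real_inner_smul_right, ← inner_add_right]
    convert inner_zero_right (f' c)
    obtain rfl : ϑ = 1 - θ := by linarith
    module
  have h1 := mul_le_mul_of_nonneg_left (hf c hc a ha) hθ
  have h2 := mul_le_mul_of_nonneg_left (hf c hc b hb) hϑ
  have hfc : f c = θ * f c + ϑ * f c := by rw [← add_mul, hθϑ, one_mul]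
  simp only [smul_eq_mul]
  linarith

theorem le_add_of_isMinOn_add {s : Set F} {φ ψ : F → ℝ} (hφ : ConvexOn ℝ s φ) {z u : F}
    (hz : z ∈ s) (hu : u ∈ s) (hmin : IsMinOn (fun v => φ v + ψ v) s z) {δ : ℝ}
    (hψ : HasDerivAt (fun r : ℝ => ψ (z + r • (u - z))) δ 0) :
    φ z ≤ φ u + δ := by
  set ℓ : ℝ → ℝ := fun r => ψ (z + r • (u - z)) + r * (φ u - φ z)
  have hℓ : HasDerivAt ℓ (δ + (φ u - φ z)) 0 :=
    hψ.add ((hasDerivAt_id' 0).mul_const _ |>.congr_deriv (one_mul _))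
  have hℓmin : IsMinOn ℓ (Icc 0 1) 0 := isMinOn_iff.2 fun r hr => by
    have hcomb : (1 - r) • z + r • u = z + r • (u - z) := by module
    have hconv := hφ.2 hz hu (sub_nonneg.2 hr.2) hr.1 (sub_add_cancel 1 r)
    have hzr := isMinOn_iff.1 hmin _
      (hcomb ▸ hφ.1 hz hu (sub_nonneg.2 hr.2) hr.1 (sub_add_cancel 1 r))
    rw [hcomb, smul_eq_mul, smul_eq_mul] at hconv
    simp only [ℓ, zero_smul, add_zero, zero_mul] at hzr ⊢
    linarith
  have hone : (1 : ℝ) ∈ posTangentConeAt (Icc 0 1) 0 :=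
    mem_posTangentConeAt_of_segment_subset (by simp [segment_eq_Icc])
  have := hℓmin.localize.hasFDerivWithinAt_nonneg hℓ.hasFDerivAt.hasFDerivWithinAt hone
  simp only [ContinuousLinearMap.toSpanSingleton_apply, smul_eq_mul, one_mul] at this
  linarith

def bregmanDiv (w : F → ℝ) (w' : F → F) (a b : F) : ℝ := w b - w a - ⟪w' a, b - a⟫

theorem bregmanDiv_sub_bregmanDiv_sub_bregmanDiv (w : F → ℝ) (w' : F → F) (a b c : F) :
    bregmanDiv w w' a c - bregmanDiv w w' a b - bregmanDiv w w' b c = ⟪w' b - w' a, c - b⟫ := by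
  simp only [bregmanDiv, inner_sub_left, inner_sub_right]
  ring

-- At `t = 0` the mean is set to `x 0`, which enters the recursion with weight `0`.
noncomputable def ergodicMean (x : ℕ → F) : ℕ → F
  | 0 => x 0
  | t + 1 => ((t : ℝ) / (t + 2)) • ergodicMean x t + (2 / ((t : ℝ) + 2)) • x (t + 1)

theorem ergodicMean_eq (x : ℕ → F) {k : ℕ} (hk : 1 ≤ k) :
    ergodicMean x k = (2 / ((k : ℝ) * ((k : ℝ) + 1))) • ∑ t ∈ Finset.Icc 1 k, (t : ℝ) • x t := by
  induction k, hk using Nat.le_induction with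
  | base => norm_num [ergodicMean]
  | succ k hk ih =>
    have hk0 : (k : ℝ) ≠ 0 := by positivity
    rw [ergodicMean, ih, Finset.sum_Icc_succ_top (by omega)]
    push_cast
    match_scalars <;> field_simp <;> ring

theorem ergodicMean_mem {X : Set F} (hX : Convex ℝ X) {x : ℕ → F} (hx : ∀ t, x t ∈ X) (t : ℕ) :
    ergodicMean x t ∈ X := by
  induction t with
  | zero => exact hx 0
  | succ t ih => exact hX ih (hx _) (by positivity) (by positivity) (by field_simp)

theorem pdg_xu_succ_eq {τ α : ℕ → ℝ} {x xt xu : ℕ → F}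
    (hτ : ∀ t, 1 ≤ t → τ t = ((t : ℝ) - 1) / 2)
    (hα : ∀ t, 1 ≤ t → α t = ((t : ℝ) - 1) / (t : ℝ))
    (hxu0 : xu 0 = x 0)
    (hxt : ∀ t, 1 ≤ t → xt t = α t • (x (t - 1) - x (t - 2)) + x (t - 1))
    (hxu : ∀ t, 1 ≤ t → xu t = (1 + τ t)⁻¹ • (xt t + τ t • xu (t - 1))) (t : ℕ) :
    xu (t + 1) = ((t : ℝ) / (t + 2)) • ergodicMean x t + (2 / ((t : ℝ) + 2)) • x t := by
  induction t with
  | zero =>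
    rw [hxu 1 le_rfl, hxt 1 le_rfl, hτ 1 le_rfl, hα 1 le_rfl, hxu0]
    norm_num
  | succ t ih =>
    rw [hxu (t + 2) (by omega), hxt (t + 2) (by omega), hτ (t + 2) (by omega),
      hα (t + 2) (by omega), show t + 2 - 1 = t + 1 from rfl, Nat.add_sub_cancel, ih,
      ergodicMean]
    push_cast
    rw [show (t : ℝ) + 2 - 1 = t + 1 by ring]
    have : 1 + ((t : ℝ) + 1) / 2 ≠ 0 := by positivity
    match_scalars <;> field_simp <;> ring

section

variable [CompleteSpace F]

theorem HasGradientAt.hasDerivAt_add_smul {f : F → ℝ} {p a d : F} {s : ℝ}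
    (hf : HasGradientAt f p (a + s • d)) :
    HasDerivAt (fun r : ℝ => f (a + r • d)) ⟪p, d⟫ s := by
  have hline : HasDerivAt (fun r : ℝ => a + r • d) d s := by
    simpa using ((hasDerivAt_id s).smul_const d).const_add a
  simpa [Function.comp_def] using
    (hasGradientAt_iff_hasFDerivAt.mp hf).comp_hasDerivAt s hline

theorem le_add_inner_add_of_lipschitz_gradient {f : F → ℝ} {f' : F → F} {L : ℝ}
    (hf : ∀ u, HasGradientAt f (f' u) u) (hL : ∀ u v, ‖f' u - f' v‖ ≤ L * ‖u - v‖) (a b : F) :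
    f b ≤ f a + ⟪f' a, b - a⟫ + L / 2 * ‖b - a‖ ^ 2 := by
  have key := le_add_deriv_add_of_deriv_sub_le_mul (c := L * ‖b - a‖ ^ 2)
    (φ := fun r : ℝ => f (a + r • (b - a))) (φ' := fun r => ⟪f' (a + r • (b - a)), b - a⟫)
    (fun r _ => (hf _).hasDerivAt_add_smul) fun r hr => by
      calc ⟪f' (a + r • (b - a)), b - a⟫ - ⟪f' (a + (0 : ℝ) • (b - a)), b - a⟫
          ≤ ‖f' (a + r • (b - a)) - f' a‖ * ‖b - a‖ := by
            rw [zero_smul, add_zero, ← inner_sub_left]; exact real_inner_le_norm _ _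
        _ ≤ L * (r * ‖b - a‖) * ‖b - a‖ := by
            gcongr
            simpa [norm_smul, abs_of_nonneg hr.1] using hL (a + r • (b - a)) a
        _ = L * ‖b - a‖ ^ 2 * r := by ring
  simp only [zero_smul, add_zero, one_smul, add_sub_cancel] at key
  linarith

theorem ConvexOn.add_inner_le {s : Set F} {f : F → ℝ} {p a b : F} (hf : ConvexOn ℝ s f)
    (ha : a ∈ s) (hb : b ∈ s) (hgrad : HasGradientAt f p a) :
    f a + ⟪p, b - a⟫ ≤ f b := by
  set ℓ : ℝ →ᵃ[ℝ] F := AffineMap.lineMap a b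
  have hℓ (r : ℝ) : ℓ r = a + r • (b - a) := by
    rw [AffineMap.lineMap_apply_module', add_comm]
  have hgrad0 : HasGradientAt f p (a + (0 : ℝ) • (b - a)) := by rwa [zero_smul, add_zero]
  have hderiv : HasDerivAt (f ∘ ℓ) ⟪p, b - a⟫ 0 := by
    simpa only [Function.comp_def, hℓ] using hgrad0.hasDerivAt_add_smul
  have := (hf.comp_affineMap ℓ).le_slope_of_hasDerivAt (by simpa [ℓ] using ha)
    (by simpa [ℓ] using hb) zero_lt_one hderiv
  rw [slope_def_field, Function.comp_apply, Function.comp_apply, hℓ, hℓ] at this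
  simp only [zero_smul, add_zero, one_smul, add_sub_cancel, sub_zero, div_one] at this
  linarith

theorem add_inner_add_le_of_strongMonotone_gradient {s : Set F} (hs : Convex ℝ s)
    {w : F → ℝ} {w' : F → F} {m : ℝ} (hw : ∀ u ∈ s, HasGradientAt w (w' u) u)
    (hm : ∀ u ∈ s, ∀ v ∈ s, m * ‖u - v‖ ^ 2 ≤ ⟪w' u - w' v, u - v⟫)
    {a b : F} (ha : a ∈ s) (hb : b ∈ s) :
    w a + ⟪w' a, b - a⟫ + m / 2 * ‖b - a‖ ^ 2 ≤ w b := by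
  have hseg : ∀ r ∈ Icc (0 : ℝ) 1, a + r • (b - a) ∈ s := fun r hr => by
    simpa [AffineMap.lineMap_apply_module', add_comm] using
      hs.lineMap_mem ha hb hr
  have key := add_deriv_add_le_of_mul_le_deriv_sub (c := m * ‖b - a‖ ^ 2)
    (φ := fun r : ℝ => w (a + r • (b - a))) (φ' := fun r => ⟪w' (a + r • (b - a)), b - a⟫)
    (fun r hr => (hw _ (hseg r hr)).hasDerivAt_add_smul) fun r hr => by
      rcases hr.1.eq_or_lt with rfl | hr0
      · simp
      have hmon := hm _ (hseg r (Ico_subset_Icc_self hr)) a ha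
      rw [add_sub_cancel_left, norm_smul, Real.norm_of_nonneg hr.1, real_inner_smul_right,
        mul_pow] at hmon
      rw [zero_smul, add_zero, ← inner_sub_left]
      nlinarith
  simp only [zero_smul, add_zero, one_smul, add_sub_cancel] at key
  linarith

theorem half_mul_sq_norm_sub_le_bregmanDiv {s : Set F} (hs : Convex ℝ s)
    {w : F → ℝ} {w' : F → F} {m : ℝ} (hw : ∀ u ∈ s, HasGradientAt w (w' u) u)
    (hm : ∀ u ∈ s, ∀ v ∈ s, m * ‖u - v‖ ^ 2 ≤ ⟪w' u - w' v, u - v⟫)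
    {a b : F} (ha : a ∈ s) (hb : b ∈ s) :
    m / 2 * ‖b - a‖ ^ 2 ≤ bregmanDiv w w' a b := by
  have := add_inner_add_le_of_strongMonotone_gradient hs hw hm ha hb
  rw [bregmanDiv]
  linarith

theorem hasDerivAt_bregmanDiv_add_smul {w : F → ℝ} {w' : F → F} {z : F}
    (hw : HasGradientAt w (w' z) z) (a d : F) :
    HasDerivAt (fun r : ℝ => bregmanDiv w w' a (z + r • d)) ⟪w' z - w' a, d⟫ 0 := by
  have hlin :
      (fun r : ℝ => ⟪w' a, z + r • d - a⟫) = fun r => ⟪w' a, z - a⟫ + r * ⟪w' a, d⟫ := by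
    funext r
    rw [add_sub_right_comm, inner_add_right, real_inner_smul_right]
  have hw0 : HasGradientAt w (w' z) (z + (0 : ℝ) • d) := by rwa [zero_smul, add_zero]
  have := (hw0.hasDerivAt_add_smul.sub_const (w a)).sub
    (hlin ▸ ((hasDerivAt_id' 0).mul_const ⟪w' a, d⟫).const_add ⟪w' a, z - a⟫)
  rw [one_mul, ← inner_sub_left] at this
  exact this

theorem add_bregmanDiv_le_of_isMinOn {s : Set F} {φ w : F → ℝ} {w' : F → F} {η : ℝ}
    (hφ : ConvexOn ℝ s φ) {a z u : F} (hw : HasGradientAt w (w' z) z) (hz : z ∈ s) (hu : u ∈ s)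
    (hmin : IsMinOn (fun v => φ v + η * bregmanDiv w w' a v) s z) :
    φ z + η * bregmanDiv w w' a z + η * bregmanDiv w w' z u ≤
      φ u + η * bregmanDiv w w' a u := by
  have := le_add_of_isMinOn_add hφ hz hu hmin
    ((hasDerivAt_bregmanDiv_add_smul hw a _).const_mul η)
  rw [← bregmanDiv_sub_bregmanDiv_sub_bregmanDiv] at this
  linarith

theorem pdg_step {X : Set F} {f ψ : F → ℝ} {f' : F → F} {D : F → F → ℝ} {L σ η a b : ℝ}
    (hf : ConvexOn ℝ univ f) (hfdiff : ∀ u, HasGradientAt f (f' u) u)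
    (hfLip : ∀ u v, ‖f' u - f' v‖ ≤ L * ‖u - v‖) (hψ : ConvexOn ℝ X ψ)
    (ha : 0 ≤ a) (hb : 0 ≤ b) (hab : a + b = 1) (hη : 0 ≤ η) (hbη : L * b ≤ σ * η)
    {y x x' z : F} (hy : y ∈ X) (hx' : x' ∈ X) (hD : σ / 2 * ‖x' - x‖ ^ 2 ≤ D x x')
    (hprox : ⟪f' (a • y + b • x), x'⟫ + ψ x' + η * D x x' + η * D x' z ≤
      ⟪f' (a • y + b • x), z⟫ + ψ z + η * D x z) :
    f (a • y + b • x') + ψ (a • y + b • x') - (f z + ψ z) ≤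
      a * (f y + ψ y - (f z + ψ z)) + b * η * (D x z - D x' z) := by
  set xu := a • y + b • x
  have hdescent := le_add_inner_add_of_lipschitz_gradient hfdiff hfLip xu (a • y + b • x')
  have hdiff : a • y + b • x' - xu = b • (x' - x) := by simp only [xu]; module
  have hsplit :
      ⟪f' xu, a • y + b • x' - xu⟫ = a * ⟪f' xu, y - xu⟫ + b * ⟪f' xu, x' - xu⟫ := by
    rw [← real_inner_smul_right, ← real_inner_smul_right, ← inner_add_right]
    congr 1
    obtain rfl : a = 1 - b := by linarith
    module
  have hfy := hf.add_inner_le (mem_univ xu) (mem_univ y) (hfdiff xu)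
  have hfz := hf.add_inner_le (mem_univ xu) (mem_univ z) (hfdiff xu)
  have hψy' : ψ (a • y + b • x') ≤ a * ψ y + b * ψ x' := hψ.2 hy hx' ha hb hab
  -- The descent-lemma error is paid for by the `η * D x x'` term of the prox inequality.
  have hquad : L / 2 * ‖a • y + b • x' - xu‖ ^ 2 ≤ b * η * D x x' := by
    rw [hdiff, norm_smul, Real.norm_of_nonneg hb]
    have h1 := mul_le_mul_of_nonneg_left hD (mul_nonneg hb hη)
    have h2 := mul_le_mul_of_nonneg_right hbη (mul_nonneg hb (sq_nonneg ‖x' - x‖))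
    linarith
  have hsplit' :
      b * ⟪f' xu, x' - xu⟫ = b * ⟪f' xu, z - xu⟫ + b * (⟪f' xu, x'⟫ - ⟪f' xu, z⟫) := by
    simp only [inner_sub_right]; ring
  have hfz' := mul_le_mul_of_nonneg_left hfz hb
  have hfy' := mul_le_mul_of_nonneg_left hfy ha
  have hprox' := mul_le_mul_of_nonneg_left hprox hb
  have hfψz : f z + ψ z = a * (f z + ψ z) + b * (f z + ψ z) := by rw [← add_mul, hab, one_mul]
  have hfxu : f xu = a * f xu + b * f xu := by rw [← add_mul, hab, one_mul]
  linarith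

theorem pdg_energy_le {X : Set F} (hX : Convex ℝ X) {f ψ w : F → ℝ} {f' w' : F → F} {L : ℝ}
    (hL : 0 ≤ L) (hf : ConvexOn ℝ univ f) (hfdiff : ∀ u, HasGradientAt f (f' u) u)
    (hfLip : ∀ u v, ‖f' u - f' v‖ ≤ L * ‖u - v‖) (hψ : ConvexOn ℝ X ψ)
    (hwdiff : ∀ u ∈ X, HasGradientAt w (w' u) u)
    (hwstrong : ∀ u ∈ X, ∀ v ∈ X, (1 / 2) * ‖u - v‖ ^ 2 ≤ ⟪w' u - w' v, u - v⟫)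
    {x xu : ℕ → F} (hxX : ∀ t, x t ∈ X)
    (hxu : ∀ t : ℕ,
      xu (t + 1) = ((t : ℝ) / (t + 2)) • ergodicMean x t + (2 / ((t : ℝ) + 2)) • x t)
    (hmin : ∀ t : ℕ, IsMinOn (fun u => ⟪f' (xu (t + 1)), u⟫ + ψ u +
      4 * L / ((t : ℝ) + 1) * bregmanDiv w w' (x t) u) X (x (t + 1)))
    {z : F} (hz : z ∈ X) (t : ℕ) :
    (t : ℝ) * (t + 1) / 2 * (f (ergodicMean x t) + ψ (ergodicMean x t) - (f z + ψ z)) +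
      4 * L * bregmanDiv w w' (x t) z ≤ 4 * L * bregmanDiv w w' (x 0) z := by
  induction t with
  | zero => simp
  | succ t ih =>
    have hprox := add_bregmanDiv_le_of_isMinOn
      (((innerₛₗ ℝ (f' (xu (t + 1)))).convexOn hX).add hψ) (hwdiff _ (hxX _)) (hxX _) hz
      (hmin t)
    have hbη : L * (2 / ((t : ℝ) + 2)) ≤ 1 / 2 * (4 * L / (t + 1)) :=
      calc L * (2 / ((t : ℝ) + 2)) ≤ L * (2 / (t + 1)) := by gcongr; linarith
        _ = 1 / 2 * (4 * L / (t + 1)) := by ring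
    have hstep := pdg_step hf hfdiff hfLip hψ (a := t / (t + 2)) (z := z)
      (by positivity) (by positivity) (by field_simp) (by positivity) hbη
      (ergodicMean_mem hX hxX t) (hxX (t + 1))
      (half_mul_sq_norm_sub_le_bregmanDiv hX hwdiff hwstrong (hxX t) (hxX (t + 1)))
      (by rw [← hxu t]; exact hprox)
    calc ((t + 1 : ℕ) : ℝ) * ((t + 1 : ℕ) + 1) / 2 *
            (f (ergodicMean x (t + 1)) + ψ (ergodicMean x (t + 1)) - (f z + ψ z)) +
          4 * L * bregmanDiv w w' (x (t + 1)) z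
        = ((t : ℝ) + 1) * (t + 2) / 2 *
            (f (ergodicMean x (t + 1)) + ψ (ergodicMean x (t + 1)) - (f z + ψ z)) +
          4 * L * bregmanDiv w w' (x (t + 1)) z := by push_cast; ring
      _ ≤ ((t : ℝ) + 1) * (t + 2) / 2 *
            ((t / (t + 2)) * (f (ergodicMean x t) + ψ (ergodicMean x t) - (f z + ψ z)) +
              2 / (t + 2) * (4 * L / (t + 1)) *
                (bregmanDiv w w' (x t) z - bregmanDiv w w' (x (t + 1)) z)) +
          4 * L * bregmanDiv w w' (x (t + 1)) z := by
        rw [ergodicMean]; gcongr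
      _ = (t : ℝ) * (t + 1) / 2 * (f (ergodicMean x t) + ψ (ergodicMean x t) - (f z + ψ z)) +
          4 * L * bregmanDiv w w' (x t) z := by field_simp; ring
      _ ≤ 4 * L * bregmanDiv w w' (x 0) z := ih

end

end

theorem pdg_nonstrongly_convex_bound_general
    {n : ℕ} (X : Set (EuclideanSpace ℝ (Fin n)))
    (hXconvex : Convex ℝ X)
    (f h w : EuclideanSpace ℝ (Fin n) → ℝ)
    (f' w' : EuclideanSpace ℝ (Fin n) → EuclideanSpace ℝ (Fin n))
    (μ Lf : ℝ) (hμ : 0 ≤ μ) (hLf : 0 < Lf)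
    (hfconv : ConvexOn ℝ Set.univ f)
    (hfdiff : ∀ u, HasGradientAt f (f' u) u)
    (hfLip : ∀ u v, ‖f' u - f' v‖ ≤ Lf * ‖u - v‖)
    (hhconv : ConvexOn ℝ X h)
    (hwdiff : ∀ u, HasGradientAt w (w' u) u)
    (hwstrong : ∀ u ∈ X, ∀ v ∈ X, (1 / 2) * ‖u - v‖ ^ 2 ≤ ⟪w' u - w' v, u - v⟫)
    (P : EuclideanSpace ℝ (Fin n) → EuclideanSpace ℝ (Fin n) → ℝ)
    (hP : ∀ x' xx, P x' xx = w xx - w x' - ⟪w' x', xx - x'⟫)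
    (τ η α : ℕ → ℝ)
    (hτ : ∀ t, 1 ≤ t → τ t = ((t : ℝ) - 1) / 2)
    (hη : ∀ t, 1 ≤ t → η t = 4 * Lf / (t : ℝ))
    (hα : ∀ t, 1 ≤ t → α t = ((t : ℝ) - 1) / (t : ℝ))
    (x xt xu g : ℕ → EuclideanSpace ℝ (Fin n))
    (hx0 : x 0 ∈ X)
    (hxu0 : xu 0 = x 0)
    (hxt : ∀ t, 1 ≤ t → xt t = α t • (x (t - 1) - x (t - 2)) + x (t - 1))
    (hxu : ∀ t, 1 ≤ t → xu t = (1 + τ t)⁻¹ • (xt t + τ t • xu (t - 1)))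
    (hg : ∀ t, 1 ≤ t → g t = f' (xu t))
    (hxmem : ∀ t, 1 ≤ t → x t ∈ X)
    (hxmin : ∀ t, 1 ≤ t → ∀ u ∈ X,
      ⟪g t, x t⟫ + h (x t) + μ * w (x t) + η t * P (x (t - 1)) (x t) ≤
        ⟪g t, u⟫ + h u + μ * w u + η t * P (x (t - 1)) u)
    (xstar : EuclideanSpace ℝ (Fin n)) (hxstarX : xstar ∈ X)
    (k : ℕ) (hk : 1 ≤ k)
    (xbar : EuclideanSpace ℝ (Fin n))
    (hxbar : xbar = (2 / ((k : ℝ) * ((k : ℝ) + 1))) •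
        ∑ t ∈ Finset.Icc 1 k, (t : ℝ) • x t) :
    (f xbar + h xbar + μ * w xbar) - (f xstar + h xstar + μ * w xstar) ≤
      8 * Lf / ((k : ℝ) * ((k : ℝ) + 1)) * P (x 0) xstar := by
  obtain rfl : P = bregmanDiv w w' := funext₂ hP
  have hxX : ∀ t, x t ∈ X := fun t => t.eq_zero_or_pos.elim (fun ht => ht ▸ hx0) (hxmem t)
  have hwconv : ConvexOn ℝ X w := convexOn_of_add_inner_le hXconvex fun a ha b hb =>
    le_trans (le_add_of_nonneg_right (by positivity))
      (add_inner_add_le_of_strongMonotone_gradient hXconvex (fun u _ => hwdiff u) hwstrong ha hb)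
  have hmin : ∀ t : ℕ, IsMinOn (fun u => ⟪f' (xu (t + 1)), u⟫ + (h u + μ * w u) +
      4 * Lf / ((t : ℝ) + 1) * bregmanDiv w w' (x t) u) X (x (t + 1)) := fun t =>
    isMinOn_iff.2 fun u hu => by
      have := hxmin (t + 1) (by omega) u hu
      rw [hg _ (by omega), hη _ (by omega), Nat.add_sub_cancel] at this
      push_cast at this
      linarith
  have henergy := pdg_energy_le hXconvex hLf.le hfconv hfdiff hfLip
    (hhconv.add (hwconv.smul hμ)) (fun u _ => hwdiff u) hwstrong hxX
    (pdg_xu_succ_eq hτ hα hxu0 hxt hxu) hmin hxstarX k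
  have hDk : 0 ≤ bregmanDiv w w' (x k) xstar := le_trans (by positivity)
    (half_mul_sq_norm_sub_le_bregmanDiv hXconvex (fun u _ => hwdiff u) hwstrong (hxX k) hxstarX)
  rw [ergodicMean_eq x hk, ← hxbar] at henergy
  simp only [Pi.add_apply, smul_eq_mul] at henergy
  rw [div_mul_eq_mul_div, le_div_iff₀ (by positivity)]
  linarith [mul_nonneg hLf.le hDk]

/-- Theorem 2.2(b), PDG for problems that need not be strongly convex:
with `τ_t = (t-1)/2`, `η_t = 4L_f/t`, `α_t = (t-1)/t`, `θ_t = t`, and the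
ergodic mean `x̄^k = (2/(k(k+1))) Σ_{t=1}^k t·x^t`, one has
`Ψ(x̄^k) - Ψ(x*) ≤ (8 L_f/(k(k+1))) P(x^0, x*)` for every `k ≥ 1`. -/
theorem pdg_nonstrongly_convex_bound
    {n : ℕ} (X : Set (EuclideanSpace ℝ (Fin n)))
    (hXne : X.Nonempty) (hXclosed : IsClosed X) (hXconvex : Convex ℝ X)
    (f h w : EuclideanSpace ℝ (Fin n) → ℝ)
    (f' w' : EuclideanSpace ℝ (Fin n) → EuclideanSpace ℝ (Fin n))
    (μ Lf : ℝ) (hμ : 0 ≤ μ) (hLf : 0 < Lf)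
    (hfconv : ConvexOn ℝ Set.univ f)
    (hfdiff : ∀ u, HasGradientAt f (f' u) u)
    (hfLip : ∀ u v, ‖f' u - f' v‖ ≤ Lf * ‖u - v‖)
    (hhconv : ConvexOn ℝ X h)
    (hwdiff : ∀ u, HasGradientAt w (w' u) u)
    (hwstrong : ∀ u ∈ X, ∀ v ∈ X, (1 / 2) * ‖u - v‖ ^ 2 ≤ ⟪w' u - w' v, u - v⟫)
    (P : EuclideanSpace ℝ (Fin n) → EuclideanSpace ℝ (Fin n) → ℝ)
    (hP : ∀ x' xx, P x' xx = w xx - w x' - ⟪w' x', xx - x'⟫)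
    (τ η α : ℕ → ℝ)
    (hτ : ∀ t, 1 ≤ t → τ t = ((t : ℝ) - 1) / 2)
    (hη : ∀ t, 1 ≤ t → η t = 4 * Lf / (t : ℝ))
    (hα : ∀ t, 1 ≤ t → α t = ((t : ℝ) - 1) / (t : ℝ))
    (x xt xu g : ℕ → EuclideanSpace ℝ (Fin n))
    (hx0 : x 0 ∈ X)
    (hxu0 : xu 0 = x 0)
    (hxt : ∀ t, 1 ≤ t → xt t = α t • (x (t - 1) - x (t - 2)) + x (t - 1))
    (hxu : ∀ t, 1 ≤ t → xu t = (1 + τ t)⁻¹ • (xt t + τ t • xu (t - 1)))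
    (hg : ∀ t, 1 ≤ t → g t = f' (xu t))
    (hxmem : ∀ t, 1 ≤ t → x t ∈ X)
    (hxmin : ∀ t, 1 ≤ t → ∀ u ∈ X,
      ⟪g t, x t⟫ + h (x t) + μ * w (x t) + η t * P (x (t - 1)) (x t) ≤
        ⟪g t, u⟫ + h u + μ * w u + η t * P (x (t - 1)) u)
    (xstar : EuclideanSpace ℝ (Fin n)) (hxstarX : xstar ∈ X)
    (hopt : ∀ u ∈ X, f xstar + h xstar + μ * w xstar ≤ f u + h u + μ * w u)
    (k : ℕ) (hk : 1 ≤ k)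
    (xbar : EuclideanSpace ℝ (Fin n))
    (hxbar : xbar = (2 / ((k : ℝ) * ((k : ℝ) + 1))) •
        ∑ t ∈ Finset.Icc 1 k, (t : ℝ) • x t) :
    (f xbar + h xbar + μ * w xbar) - (f xstar + h xstar + μ * w xstar) ≤
      8 * Lf / ((k : ℝ) * ((k : ℝ) + 1)) * P (x 0) xstar :=
  pdg_nonstrongly_convex_bound_general X hXconvex f h w f' w' μ Lf hμ hLf hfconv hfdiff hfLip hhconv
    hwdiff hwstrong P hP τ η α hτ hη hα x xt xu g hx0 hxu0 hxt hxu hg hxmem hxmin xstar hxstarX k hk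
    xbar hxbar
end

section
/- Lemma 2.1 (dual prox-mapping equals a gradient computation): Let f : ℝⁿ → ℝ be convex and differentiable with L_f-Lipschitz gradient, and let J_f denote its Fenchel conjugate J_f(g) = sup_{x∈ℝⁿ} (⟨x, g⟩ − f(x)). Let x̃ ∈ ℝⁿ, let g^0 ∈ ℝⁿ and x^0 ∈ ℝⁿ satisfy x^0 ∈ ∂J_f(g^0) (equivalently g^0 = ∇f(x^0)), define D_f(g^0, g) := J_f(g) − J_f(g^0) − ⟨x^0, g − g^0⟩, let τ > 0, and set z = (x̃ + τ x^0)/(1 + τ). Then ∇f(z) is a minimizer over all g with J_f(g) < +∞ of the function g ↦ ⟨−x̃, g⟩ + J_f(g) + τ·D_f(g^0, g). -/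
/-!
The point `z` satisfies `(1 + τ) z = x̃ + τ x⁰`, so up to an additive constant the objective is
`(1 + τ) (J_f(g) - ⟪z, g⟫)`. By the gradient inequality for `f` at `z`, the supremum defining
`J_f(∇f(z))` is attained at `z`, whence `J_f(∇f(z)) - ⟪z, ∇f(z)⟫ = -f(z)`, while the
Fenchel–Young inequality gives `J_f(g) - ⟪z, g⟫ ≥ -f(z)` for every `g` in the domain of `J_f`.
-/

open Set
open scoped RealInnerProductSpace

theorem ConvexOn.add_fderiv_sub_le {E : Type*} [NormedAddCommGroup E] [NormedSpace ℝ E]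
    {f : E → ℝ} {f' : E →L[ℝ] ℝ} {s : Set E} {x y : E} (hf : ConvexOn ℝ s f)
    (hx : x ∈ s) (hy : y ∈ s) (hfx : HasFDerivAt f f' x) :
    f x + f' (y - x) ≤ f y := by
  let c : ℝ →ᵃ[ℝ] E := AffineMap.lineMap x y
  have hc0 : c 0 = x := AffineMap.lineMap_apply_zero x y
  have hc1 : c 1 = y := AffineMap.lineMap_apply_one x y
  have hline : ConvexOn ℝ (c ⁻¹' s) (f ∘ c) := hf.comp_affineMap c
  have hderiv : HasDerivAt (f ∘ c) (f' (y - x)) 0 :=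
    (hc0 ▸ hfx).comp_hasDerivAt (0 : ℝ) AffineMap.hasDerivAt_lineMap
  have hslope := hline.le_slope_of_hasDerivAt (x := 0) (y := 1)
    (by simpa [hc0] using hx) (by simpa [hc1] using hy) zero_lt_one hderiv
  rw [slope_def_field, Function.comp_apply, Function.comp_apply, hc0, hc1, sub_zero,
    div_one] at hslope
  linarith

section Conjugate

variable {F : Type*} [NormedAddCommGroup F] [InnerProductSpace ℝ F] [CompleteSpace F]
  {f : F → ℝ} {x g : F}

theorem ConvexOn.add_inner_gradient_sub_le {s : Set F} {y : F} (hf : ConvexOn ℝ s f)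
    (hx : x ∈ s) (hy : y ∈ s) (hfx : HasGradientAt f g x) :
    f x + ⟪g, y - x⟫ ≤ f y :=
  hf.add_fderiv_sub_le hx hy hfx.hasFDerivAt

theorem ConvexOn.isGreatest_range_inner_sub_of_hasGradientAt (hf : ConvexOn ℝ univ f)
    (hfx : HasGradientAt f g x) :
    IsGreatest (range fun u => ⟪u, g⟫ - f u) (⟪x, g⟫ - f x) := by
  refine ⟨mem_range_self x, ?_⟩
  rintro _ ⟨u, rfl⟩
  have := hf.add_inner_gradient_sub_le (mem_univ x) (mem_univ u) hfx
  rw [inner_sub_right, real_inner_comm u g, real_inner_comm x g] at this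
  show ⟪u, g⟫ - f u ≤ ⟪x, g⟫ - f x
  linarith

theorem ConvexOn.iSup_inner_gradient_sub_le (hf : ConvexOn ℝ univ f)
    (hfx : HasGradientAt f g x) {g' : F} (hg' : BddAbove (range fun u => ⟪u, g'⟫ - f u)) :
    (⨆ u, (⟪u, g⟫ - f u)) - ⟪x, g⟫ ≤ (⨆ u, (⟪u, g'⟫ - f u)) - ⟪x, g'⟫ := by
  have hsup : (⨆ u, (⟪u, g⟫ - f u)) = ⟪x, g⟫ - f x :=
    (hf.isGreatest_range_inner_sub_of_hasGradientAt hfx).csSup_eq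
  rw [hsup]
  linarith [le_ciSup hg' x]

end Conjugate

theorem dual_prox_is_gradient_general
    {n : ℕ}
    (f : EuclideanSpace ℝ (Fin n) → ℝ)
    (f' : EuclideanSpace ℝ (Fin n) → EuclideanSpace ℝ (Fin n))
    (hfconv : ConvexOn ℝ Set.univ f)
    (hfdiff : ∀ u, HasGradientAt f (f' u) u)
    (J : EuclideanSpace ℝ (Fin n) → ℝ)
    (hJ : ∀ g, J g = ⨆ u, (⟪u, g⟫ - f u))
    (xtil x0 g0 : EuclideanSpace ℝ (Fin n))
    (D : EuclideanSpace ℝ (Fin n) → ℝ)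
    (hD : ∀ g, D g = J g - J g0 - ⟪x0, g - g0⟫)
    (τ : ℝ) (hτ : 0 < τ)
    (z : EuclideanSpace ℝ (Fin n)) (hz : z = (1 + τ)⁻¹ • (xtil + τ • x0)) :
    BddAbove (Set.range fun u => ⟪u, f' z⟫ - f u) ∧
    ∀ g, BddAbove (Set.range fun u => ⟪u, g⟫ - f u) →
      ⟪-xtil, f' z⟫ + J (f' z) + τ * D (f' z) ≤ ⟪-xtil, g⟫ + J g + τ * D g := by
  have hzτ : xtil + τ • x0 = (1 + τ) • z := by
    rw [hz, smul_smul, mul_inv_cancel₀ (by positivity), one_smul]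
  have hobjective : ∀ g, ⟪-xtil, g⟫ + J g + τ * D g
      = (1 + τ) * (J g - ⟪z, g⟫) + τ * (⟪x0, g0⟫ - J g0) := by
    intro g
    have hinner : ⟪xtil, g⟫ + τ * ⟪x0, g⟫ = (1 + τ) * ⟪z, g⟫ := by
      rw [← real_inner_smul_left, ← real_inner_smul_left, ← inner_add_left, hzτ]
    rw [hD, inner_sub_right, inner_neg_left]
    linear_combination -hinner
  refine ⟨(hfconv.isGreatest_range_inner_sub_of_hasGradientAt (hfdiff z)).bddAbove,
    fun g hg => ?_⟩
  rw [hobjective, hobjective, hJ, hJ g]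
  gcongr (1 + τ) * ?_ + _
  exact hfconv.iSup_inner_gradient_sub_le (hfdiff z) hg

/-- Lemma 2.1: computing the dual prox-mapping associated with the Bregman
distance `D_f` of the conjugate `J_f` (with subgradient selection
`x^0 ∈ ∂J_f(g^0)`, i.e. `g^0 = ∇f(x^0)`) is equivalent to a gradient
computation: `∇f(z)` with `z = (x̃ + τ x^0)/(1+τ)` minimizes
`g ↦ ⟨-x̃, g⟩ + J_f(g) + τ D_f(g^0, g)` over the domain of `J_f`. -/
theorem dual_prox_is_gradient
    {n : ℕ}
    (f : EuclideanSpace ℝ (Fin n) → ℝ)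
    (f' : EuclideanSpace ℝ (Fin n) → EuclideanSpace ℝ (Fin n))
    (Lf : ℝ) (hLf : 0 ≤ Lf)
    (hfconv : ConvexOn ℝ Set.univ f)
    (hfdiff : ∀ u, HasGradientAt f (f' u) u)
    (hfLip : ∀ u v, ‖f' u - f' v‖ ≤ Lf * ‖u - v‖)
    (J : EuclideanSpace ℝ (Fin n) → ℝ)
    (hJ : ∀ g, J g = ⨆ u, (⟪u, g⟫ - f u))
    (xtil x0 g0 : EuclideanSpace ℝ (Fin n)) (hg0 : g0 = f' x0)
    (D : EuclideanSpace ℝ (Fin n) → ℝ)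
    (hD : ∀ g, D g = J g - J g0 - ⟪x0, g - g0⟫)
    (τ : ℝ) (hτ : 0 < τ)
    (z : EuclideanSpace ℝ (Fin n)) (hz : z = (1 + τ)⁻¹ • (xtil + τ • x0)) :
    BddAbove (Set.range fun u => ⟪u, f' z⟫ - f u) ∧
    ∀ g, BddAbove (Set.range fun u => ⟪u, g⟫ - f u) →
      ⟪-xtil, f' z⟫ + J (f' z) + τ * D (f' z) ≤ ⟪-xtil, g⟫ + J g + τ * D g :=
  dual_prox_is_gradient_general f f' hfconv hfdiff J hJ xtil x0 g0 D hD τ hτ z hz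
end

section
/- Primal–dual gap lemma (equations (2.21)–(2.22)): Let x̄ ∈ X and ḡ ∈ ℝⁿ with J_f(ḡ) < +∞ be given, set ḡ* = ∇f(x̄), and let x* be an optimal solution of min_{x∈X} Ψ(x) with g* = ∇f(x*). Then (i) Ψ(x̄) − Ψ(x*) = Q_f((x̄, g*), (x*, ḡ*)); (ii) Ψ(x̄) − Ψ(x*) ≤ gap*((x̄, ḡ)) := sup_{g : J_f(g)<+∞} Q_f((x̄, ḡ), (x*, g)); and (iii) if X is bounded, gap*((x̄, ḡ)) ≤ gap((x̄, ḡ)) := sup_{x ∈ X, g : J_f(g)<+∞} Q_f((x̄, ḡ), (x, g)). -/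
/-!
Everything rests on the first-order characterisation of convexity: the gradient inequality
`f x + ⟪∇f x, u - x⟫ ≤ f u` says that `u = x` maximises `⟪u, ∇f x⟫ - f u`, so the conjugate
at a gradient is `J (∇f x) = ⟪x, ∇f x⟫ - f x` (Fenchel–Young equality). Substituting this for
`J (∇f x̄)` and `J (∇f x*)` turns (i) into an identity. For (ii), take `g = ∇f x̄` in the
supremum and bound `J ḡ` below by the Fenchel–Young inequality `⟪x*, ḡ⟫ - f x* ≤ J ḡ`;
(iii) takes `x = x*` in the outer supremum.
-/

open scoped RealInnerProductSpace
open Set AffineMap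

theorem ConvexOn.apply_add_le_of_hasFDerivAt {E : Type*} [NormedAddCommGroup E] [NormedSpace ℝ E]
    {s : Set E} {f : E → ℝ} {f' : E →L[ℝ] ℝ} {x y : E}
    (hf : ConvexOn ℝ s f) (hx : x ∈ s) (hy : y ∈ s) (hf' : HasFDerivAt f f' x) :
    f x + f' (y - x) ≤ f y := by
  let ℓ : ℝ →ᵃ[ℝ] E := lineMap x y
  have hline : ConvexOn ℝ (ℓ ⁻¹' s) (f ∘ ℓ) := hf.comp_affineMap ℓ
  have hℓ0 : ℓ 0 = x := lineMap_apply_zero x y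
  have hℓ1 : ℓ 1 = y := lineMap_apply_one x y
  have hderiv : HasDerivAt (f ∘ ℓ) (f' (y - x)) 0 :=
    hf'.comp_hasDerivAt_of_eq 0 hasDerivAt_lineMap hℓ0.symm
  have hslope := hline.le_slope_of_hasDerivAt (show ℓ 0 ∈ s from hℓ0 ▸ hx)
    (show ℓ 1 ∈ s from hℓ1 ▸ hy) one_pos hderiv
  rw [slope_def_field, Function.comp_apply, Function.comp_apply, hℓ0, hℓ1, sub_zero, div_one]
    at hslope
  linarith

theorem ConvexOn.apply_add_inner_le_of_hasGradientAt {F : Type*} [NormedAddCommGroup F]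
    [InnerProductSpace ℝ F] [CompleteSpace F] {s : Set F} {f : F → ℝ} {g x y : F}
    (hf : ConvexOn ℝ s f) (hx : x ∈ s) (hy : y ∈ s) (hg : HasGradientAt f g x) :
    f x + ⟪g, y - x⟫ ≤ f y :=
  hf.apply_add_le_of_hasFDerivAt hx hy hg.hasFDerivAt

theorem ConvexOn.isGreatest_inner_sub_of_hasGradientAt {F : Type*} [NormedAddCommGroup F]
    [InnerProductSpace ℝ F] [CompleteSpace F] {f : F → ℝ} {g x : F}
    (hf : ConvexOn ℝ univ f) (hg : HasGradientAt f g x) :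
    IsGreatest (range fun u => ⟪u, g⟫ - f u) (⟪x, g⟫ - f x) := by
  refine ⟨⟨x, rfl⟩, ?_⟩
  rintro _ ⟨u, rfl⟩
  have := hf.apply_add_inner_le_of_hasGradientAt (mem_univ x) (mem_univ u) hg
  rw [inner_sub_right, real_inner_comm u, real_inner_comm x] at this
  dsimp only
  linarith

theorem primal_dual_gap_lemma_general
    {n : ℕ} (X : Set (EuclideanSpace ℝ (Fin n)))
    (f h w : EuclideanSpace ℝ (Fin n) → ℝ)
    (f' : EuclideanSpace ℝ (Fin n) → EuclideanSpace ℝ (Fin n))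
    (μ : ℝ)
    (hfconv : ConvexOn ℝ Set.univ f)
    (hfdiff : ∀ u, HasGradientAt f (f' u) u)
    (J : EuclideanSpace ℝ (Fin n) → ℝ)
    (hJ : ∀ g, J g = ⨆ u, (⟪u, g⟫ - f u))
    (Q : (EuclideanSpace ℝ (Fin n) × EuclideanSpace ℝ (Fin n)) →
         (EuclideanSpace ℝ (Fin n) × EuclideanSpace ℝ (Fin n)) → ℝ)
    (hQ : ∀ zb z, Q zb z =
      (h zb.1 + μ * w zb.1 + ⟪zb.1, z.2⟫ - J z.2)
      - (h z.1 + μ * w z.1 + ⟪z.1, zb.2⟫ - J zb.2))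
    (xb : EuclideanSpace ℝ (Fin n))
    (gb : EuclideanSpace ℝ (Fin n))
    (hgb : BddAbove (Set.range fun u => ⟪u, gb⟫ - f u))
    (xstar : EuclideanSpace ℝ (Fin n)) (hxstarX : xstar ∈ X) :
    ((f xb + h xb + μ * w xb) - (f xstar + h xstar + μ * w xstar)
        = Q (xb, f' xstar) (xstar, f' xb))
    ∧ (((f xb + h xb + μ * w xb) - (f xstar + h xstar + μ * w xstar) : ℝ) : EReal)
        ≤ ⨆ g : {g : EuclideanSpace ℝ (Fin n) //
              BddAbove (Set.range fun u => ⟪u, g⟫ - f u)},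
            (Q (xb, gb) (xstar, g.1) : EReal)
    ∧ (Bornology.IsBounded X →
        (⨆ g : {g : EuclideanSpace ℝ (Fin n) //
              BddAbove (Set.range fun u => ⟪u, g⟫ - f u)},
            (Q (xb, gb) (xstar, g.1) : EReal))
        ≤ ⨆ xx : X, ⨆ g : {g : EuclideanSpace ℝ (Fin n) //
              BddAbove (Set.range fun u => ⟪u, g⟫ - f u)},
            (Q (xb, gb) (xx.1, g.1) : EReal)) := by
  have hgreatest u := hfconv.isGreatest_inner_sub_of_hasGradientAt (hfdiff u)
  have hJgrad u : J (f' u) = ⟪u, f' u⟫ - f u := by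
    rw [hJ, ← sSup_range]
    exact (hgreatest u).csSup_eq
  have hJgb : ⟪xstar, gb⟫ - f xstar ≤ J gb := hJ gb ▸ le_ciSup hgb xstar
  refine ⟨?_, ?_, fun _ => le_iSup_of_le ⟨xstar, hxstarX⟩ le_rfl⟩
  · rw [hQ, hJgrad, hJgrad]
    ring
  · have hgap : (f xb + h xb + μ * w xb) - (f xstar + h xstar + μ * w xstar)
        ≤ Q (xb, gb) (xstar, f' xb) := by
      rw [hQ, hJgrad]
      linarith
    exact (EReal.coe_le_coe_iff.mpr hgap).trans
      (le_iSup_of_le ⟨f' xb, (hgreatest xb).bddAbove⟩ le_rfl)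

/-- Primal–dual gap lemma (equations (2.21)–(2.22)): with `ḡ* = ∇f(x̄)`,
`g* = ∇f(x*)`, (i) `Ψ(x̄) - Ψ(x*) = Q_f((x̄, g*), (x*, ḡ*))`;
(ii) `Ψ(x̄) - Ψ(x*) ≤ gap*((x̄, ḡ)) = sup_{g ∈ dom J_f} Q_f((x̄, ḡ), (x*, g))`;
(iii) if `X` is bounded then `gap*((x̄, ḡ)) ≤ gap((x̄, ḡ))`.
The suprema are taken in `EReal` over the domain of the conjugate `J_f`. -/
theorem primal_dual_gap_lemma
    {n : ℕ} (X : Set (EuclideanSpace ℝ (Fin n)))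
    (hXne : X.Nonempty) (hXclosed : IsClosed X) (hXconvex : Convex ℝ X)
    (f h w : EuclideanSpace ℝ (Fin n) → ℝ)
    (f' : EuclideanSpace ℝ (Fin n) → EuclideanSpace ℝ (Fin n))
    (μ Lf : ℝ) (hμ : 0 ≤ μ) (hLf : 0 ≤ Lf)
    (hfconv : ConvexOn ℝ Set.univ f)
    (hfdiff : ∀ u, HasGradientAt f (f' u) u)
    (hfLip : ∀ u v, ‖f' u - f' v‖ ≤ Lf * ‖u - v‖)
    (hhconv : ConvexOn ℝ X h) (hwconv : ConvexOn ℝ X w)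
    (J : EuclideanSpace ℝ (Fin n) → ℝ)
    (hJ : ∀ g, J g = ⨆ u, (⟪u, g⟫ - f u))
    (Q : (EuclideanSpace ℝ (Fin n) × EuclideanSpace ℝ (Fin n)) →
         (EuclideanSpace ℝ (Fin n) × EuclideanSpace ℝ (Fin n)) → ℝ)
    (hQ : ∀ zb z, Q zb z =
      (h zb.1 + μ * w zb.1 + ⟪zb.1, z.2⟫ - J z.2)
      - (h z.1 + μ * w z.1 + ⟪z.1, zb.2⟫ - J zb.2))
    (xb : EuclideanSpace ℝ (Fin n)) (hxb : xb ∈ X)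
    (gb : EuclideanSpace ℝ (Fin n))
    (hgb : BddAbove (Set.range fun u => ⟪u, gb⟫ - f u))
    (xstar : EuclideanSpace ℝ (Fin n)) (hxstarX : xstar ∈ X)
    (hopt : ∀ u ∈ X, f xstar + h xstar + μ * w xstar ≤ f u + h u + μ * w u) :
    ((f xb + h xb + μ * w xb) - (f xstar + h xstar + μ * w xstar)
        = Q (xb, f' xstar) (xstar, f' xb))
    ∧ (((f xb + h xb + μ * w xb) - (f xstar + h xstar + μ * w xstar) : ℝ) : EReal)
        ≤ ⨆ g : {g : EuclideanSpace ℝ (Fin n) //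
              BddAbove (Set.range fun u => ⟪u, g⟫ - f u)},
            (Q (xb, gb) (xstar, g.1) : EReal)
    ∧ (Bornology.IsBounded X →
        (⨆ g : {g : EuclideanSpace ℝ (Fin n) //
              BddAbove (Set.range fun u => ⟪u, g⟫ - f u)},
            (Q (xb, gb) (xstar, g.1) : EReal))
        ≤ ⨆ xx : X, ⨆ g : {g : EuclideanSpace ℝ (Fin n) //
              BddAbove (Set.range fun u => ⟪u, g⟫ - f u)},
            (Q (xb, gb) (xx.1, g.1) : EReal)) :=
  primal_dual_gap_lemma_general X f h w f' μ hfconv hfdiff J hJ Q hQ xb gb hgb xstar hxstarX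
end

section
/- Lemma 5.2 (bound of the primal gap by the multi-dual gap function): Let x̄ ∈ X and ȳ = (ȳ_1, …, ȳ_m) with J_i(ȳ_i) < +∞ for each i be given, and let z* = (x*, y*) where x* is an optimal solution of min_{x∈X} Ψ(x) and y*_i = ∇f_i(x*). Then Ψ(x̄) − Ψ(x*) ≤ Q((x̄, ȳ), z*) + (L_f/2)·‖x̄ − x*‖². -/
/-! The descent lemma for the `L_f`-smooth `f = ∑ fᵢ` bounds `f x̄` by its linearization at `x*`
plus `(L_f/2)‖x̄ - x*‖²`. By the gradient inequality, `∇fᵢ(x*)` attains the supremum defining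
`Jᵢ` at `x*`, so `Jᵢ(∇fᵢ(x*)) = ⟪x*, ∇fᵢ(x*)⟫ - fᵢ(x*)`, while Fenchel–Young gives
`Jᵢ(ȳᵢ) ≥ ⟪x*, ȳᵢ⟫ - fᵢ(x*)`. Substituting both into `Q` leaves exactly that linearization. -/

open scoped RealInnerProductSpace

variable {E : Type*} [NormedAddCommGroup E] [InnerProductSpace ℝ E]

-- `⨆` of a family unbounded above is `0` in `ℝ`, hence the `BddAbove` hypotheses below.
noncomputable def fenchelConjugate (f : E → ℝ) (y : E) : ℝ := ⨆ u, ⟪u, y⟫ - f u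

theorem inner_sub_le_fenchelConjugate {f : E → ℝ} {y : E}
    (hy : BddAbove (Set.range fun u => ⟪u, y⟫ - f u)) (x : E) :
    ⟪x, y⟫ - f x ≤ fenchelConjugate f y :=
  le_ciSup hy x

variable [CompleteSpace E]

open AffineMap in
theorem HasGradientAt.hasDerivAt_comp_lineMap {f : E → ℝ} {g x y : E} {t : ℝ}
    (hf : HasGradientAt f g (lineMap x y t)) :
    HasDerivAt (fun s : ℝ => f (lineMap x y s)) ⟪g, y - x⟫ t :=
  (hasGradientAt_iff_hasFDerivAt.mp hf).comp_hasDerivAt t hasDerivAt_lineMap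

theorem HasGradientAt.sum {ι : Type*} {s : Finset ι} {f : ι → E → ℝ} {g : ι → E} {x : E}
    (hf : ∀ i ∈ s, HasGradientAt (f i) (g i) x) :
    HasGradientAt (fun u => ∑ i ∈ s, f i u) (∑ i ∈ s, g i) x := by
  rw [hasGradientAt_iff_hasFDerivAt, map_sum]
  exact HasFDerivAt.fun_sum fun i hi => hasGradientAt_iff_hasFDerivAt.mp (hf i hi)

theorem ConvexOn.add_inner_sub_le_of_hasGradientAt {f : E → ℝ} {g x : E}
    (hf : ConvexOn ℝ Set.univ f) (hg : HasGradientAt f g x) (y : E) :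
    f x + ⟪g, y - x⟫ ≤ f y := by
  have hline : ConvexOn ℝ Set.univ (fun t : ℝ => f (AffineMap.lineMap x y t)) :=
    hf.comp_affineMap (AffineMap.lineMap x y)
  have hderiv : HasDerivAt (fun t : ℝ => f (AffineMap.lineMap x y t)) ⟪g, y - x⟫ 0 :=
    HasGradientAt.hasDerivAt_comp_lineMap (by simpa using hg)
  have hslope := hline.le_slope_of_hasDerivAt (Set.mem_univ 0) (Set.mem_univ 1) one_pos hderiv
  simp only [slope_def_field, AffineMap.lineMap_apply_one, AffineMap.lineMap_apply_zero,
    sub_zero, div_one] at hslope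
  linarith

theorem le_add_inner_add_sq_of_lipschitz_gradient {F : E → ℝ} {G : E → E} {L : ℝ}
    (hG : ∀ p, HasGradientAt F (G p) p) (hLip : ∀ u v, ‖G u - G v‖ ≤ L * ‖u - v‖) (x y : E) :
    F y ≤ F x + ⟪G x, y - x⟫ + L / 2 * ‖y - x‖ ^ 2 := by
  set d := y - x
  have hline (t : ℝ) : HasDerivAt (fun s => F (AffineMap.lineMap x y s))
      ⟪G (AffineMap.lineMap x y t), d⟫ t :=
    (hG _).hasDerivAt_comp_lineMap
  have hquad (t : ℝ) : HasDerivAt (fun s => F x + s * ⟪G x, d⟫ + L / 2 * s ^ 2 * ‖d‖ ^ 2)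
      (⟪G x, d⟫ + L * t * ‖d‖ ^ 2) t := by
    refine ((((hasDerivAt_id t).mul_const ⟪G x, d⟫).const_add (F x)).add
      (((hasDerivAt_pow 2 t).const_mul (L / 2)).mul_const (‖d‖ ^ 2))).congr_deriv ?_
    simp only [Nat.cast_ofNat]
    ring
  have hslope (t : ℝ) (ht : 0 ≤ t) :
      ⟪G (AffineMap.lineMap x y t), d⟫ ≤ ⟪G x, d⟫ + L * t * ‖d‖ ^ 2 := by
    have hstep : AffineMap.lineMap x y t - x = t • d := AffineMap.lineMap_vsub_left x y t
    calc ⟪G (AffineMap.lineMap x y t), d⟫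
        = ⟪G x, d⟫ + ⟪G (AffineMap.lineMap x y t) - G x, d⟫ := by rw [inner_sub_left]; ring
      _ ≤ ⟪G x, d⟫ + L * ‖AffineMap.lineMap x y t - x‖ * ‖d‖ := by
          gcongr
          exact (real_inner_le_norm _ _).trans (by gcongr; exact hLip _ _)
      _ = ⟪G x, d⟫ + L * t * ‖d‖ ^ 2 := by
          rw [hstep, norm_smul, Real.norm_of_nonneg ht]; ring
  simpa using image_le_of_deriv_right_le_deriv_boundary
    (fun t _ => (hline t).continuousAt.continuousWithinAt)
    (fun t _ => (hline t).hasDerivWithinAt) (by simp)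
    (fun t _ => (hquad t).continuousAt.continuousWithinAt)
    (fun t _ => (hquad t).hasDerivWithinAt) (fun t ht => hslope t ht.1)
    (Set.right_mem_Icc.2 zero_le_one)

theorem ConvexOn.fenchelConjugate_eq_of_hasGradientAt {f : E → ℝ} {g x : E}
    (hf : ConvexOn ℝ Set.univ f) (hg : HasGradientAt f g x) :
    fenchelConjugate f g = ⟪x, g⟫ - f x := by
  have hle (u : E) : ⟪u, g⟫ - f u ≤ ⟪x, g⟫ - f x := by
    have := hf.add_inner_sub_le_of_hasGradientAt hg u
    rw [inner_sub_right, real_inner_comm u g, real_inner_comm x g] at this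
    linarith
  exact le_antisymm (ciSup_le hle)
    (inner_sub_le_fenchelConjugate ⟨_, Set.forall_mem_range.2 hle⟩ x)

theorem primal_gap_le_Q_general
    {n m : ℕ}
    (f : Fin m → EuclideanSpace ℝ (Fin n) → ℝ)
    (f' : Fin m → EuclideanSpace ℝ (Fin n) → EuclideanSpace ℝ (Fin n))
    (Lf μ : ℝ)
    (hfconv : ∀ i, ConvexOn ℝ Set.univ (f i))
    (hfdiff : ∀ i u, HasGradientAt (f i) (f' i u) u)
    (hfLip : ∀ u v, ‖(∑ i, f' i u) - ∑ i, f' i v‖ ≤ Lf * ‖u - v‖)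
    (h w : EuclideanSpace ℝ (Fin n) → ℝ)
    (J : Fin m → EuclideanSpace ℝ (Fin n) → ℝ)
    (hJ : ∀ i y, J i y = ⨆ u, (⟪u, y⟫ - f i u))
    (Q : (EuclideanSpace ℝ (Fin n) × (Fin m → EuclideanSpace ℝ (Fin n))) →
         (EuclideanSpace ℝ (Fin n) × (Fin m → EuclideanSpace ℝ (Fin n))) → ℝ)
    (hQ : ∀ zb z, Q zb z =
      (h zb.1 + μ * w zb.1 + ⟪zb.1, ∑ i, z.2 i⟫ - ∑ i, J i (z.2 i))
      - (h z.1 + μ * w z.1 + ⟪z.1, ∑ i, zb.2 i⟫ - ∑ i, J i (zb.2 i)))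
    (xb : EuclideanSpace ℝ (Fin n))
    (yb : Fin m → EuclideanSpace ℝ (Fin n))
    (hyb : ∀ i, BddAbove (Set.range fun u => ⟪u, yb i⟫ - f i u))
    (xstar : EuclideanSpace ℝ (Fin n)) :
    ((∑ i, f i xb) + h xb + μ * w xb) - ((∑ i, f i xstar) + h xstar + μ * w xstar)
      ≤ Q (xb, yb) (xstar, fun i => f' i xstar) + Lf / 2 * ‖xb - xstar‖ ^ 2 := by
  have hdescent := le_add_inner_add_sq_of_lipschitz_gradient
    (fun p => HasGradientAt.sum fun i _ => hfdiff i p) hfLip xstar xb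
  have hJstar : ∑ i, J i (f' i xstar) = ∑ i, (⟪xstar, f' i xstar⟫ - f i xstar) :=
    Finset.sum_congr rfl fun i _ =>
      (hJ i _).trans ((hfconv i).fenchelConjugate_eq_of_hasGradientAt (hfdiff i xstar))
  have hJyb : ∑ i, (⟪xstar, yb i⟫ - f i xstar) ≤ ∑ i, J i (yb i) :=
    Finset.sum_le_sum fun i _ => (hJ i _).symm ▸ inner_sub_le_fenchelConjugate (hyb i) xstar
  simp only [Finset.sum_sub_distrib, ← inner_sum] at hJstar hJyb
  rw [inner_sub_right, real_inner_comm xb, real_inner_comm xstar] at hdescent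
  rw [hQ]
  linarith

/-- Lemma 5.2 (bound of the primal gap by the multi-dual gap function):
for any `x̄ ∈ X` and any `ȳ` in the domain of the conjugates `J_i`,
`Ψ(x̄) - Ψ(x*) ≤ Q((x̄, ȳ), z*) + (L_f/2)‖x̄ - x*‖²`, where
`z* = (x*, y*)` with `y*_i = ∇f_i(x*)`. -/
theorem primal_gap_le_Q
    {n m : ℕ} (X : Set (EuclideanSpace ℝ (Fin n)))
    (hXne : X.Nonempty) (hXclosed : IsClosed X) (hXconvex : Convex ℝ X)
    (f : Fin m → EuclideanSpace ℝ (Fin n) → ℝ)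
    (f' : Fin m → EuclideanSpace ℝ (Fin n) → EuclideanSpace ℝ (Fin n))
    (L : Fin m → ℝ) (Lf μ : ℝ) (hμ : 0 ≤ μ)
    (hfconv : ∀ i, ConvexOn ℝ Set.univ (f i))
    (hfdiff : ∀ i u, HasGradientAt (f i) (f' i u) u)
    (hfiLip : ∀ i u v, ‖f' i u - f' i v‖ ≤ L i * ‖u - v‖)
    (hfLip : ∀ u v, ‖(∑ i, f' i u) - ∑ i, f' i v‖ ≤ Lf * ‖u - v‖)
    (h w : EuclideanSpace ℝ (Fin n) → ℝ)
    (hhconv : ConvexOn ℝ X h) (hwconv : ConvexOn ℝ X w)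
    (J : Fin m → EuclideanSpace ℝ (Fin n) → ℝ)
    (hJ : ∀ i y, J i y = ⨆ u, (⟪u, y⟫ - f i u))
    (Q : (EuclideanSpace ℝ (Fin n) × (Fin m → EuclideanSpace ℝ (Fin n))) →
         (EuclideanSpace ℝ (Fin n) × (Fin m → EuclideanSpace ℝ (Fin n))) → ℝ)
    (hQ : ∀ zb z, Q zb z =
      (h zb.1 + μ * w zb.1 + ⟪zb.1, ∑ i, z.2 i⟫ - ∑ i, J i (z.2 i))
      - (h z.1 + μ * w z.1 + ⟪z.1, ∑ i, zb.2 i⟫ - ∑ i, J i (zb.2 i)))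
    (xb : EuclideanSpace ℝ (Fin n)) (hxb : xb ∈ X)
    (yb : Fin m → EuclideanSpace ℝ (Fin n))
    (hyb : ∀ i, BddAbove (Set.range fun u => ⟪u, yb i⟫ - f i u))
    (xstar : EuclideanSpace ℝ (Fin n)) (hxstarX : xstar ∈ X)
    (hopt : ∀ u ∈ X, (∑ i, f i xstar) + h xstar + μ * w xstar ≤
        (∑ i, f i u) + h u + μ * w u) :
    ((∑ i, f i xb) + h xb + μ * w xb) - ((∑ i, f i xstar) + h xstar + μ * w xstar)
      ≤ Q (xb, yb) (xstar, fun i => f' i xstar) + Lf / 2 * ‖xb - xstar‖ ^ 2 :=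
  primal_gap_le_Q_general f f' Lf μ hfconv hfdiff hfLip h w J hJ Q hQ xb yb hyb xstar
end

section
/- Corollary 3.2, parameter verification: Let m ≥ 1, μ > 0, L_i ≥ 0 for i = 1, …, m with L = Σ_{i=1}^m L_i > 0, and set C = 8L/μ, p_i = 1/(2m) + L_i/(2L), S = √((m−1)² + 4mC), τ = (S − (m−1))/(2m), η = μ(S + (m−1))/2, and α = 1 − 1/((m+1) + S). Then: (i) (1−α)(1+τ) = 1/(2m) ≤ p_i for every i; (ii) (1−α)·η = (α − ½)·μ ≤ α·μ; and (iii) η·τ = μ·C, hence η·τ·p_i ≥ 4L_i for every i. -/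
/-- Corollary 3.2, parameter verification: the non-uniform sampling
distribution and stepsizes of Corollary 3.2 satisfy conditions
(cond_s1)–(cond_s3) of Theorem 3.1. -/
theorem rpdg_nonuniform_parameters (m : ℕ) (hm : 1 ≤ m)
    (μ : ℝ) (hμ : 0 < μ)
    (L : Fin m → ℝ) (hL : ∀ i, 0 ≤ L i)
    (Lsum : ℝ) (hLsum : Lsum = ∑ i, L i) (hLpos : 0 < Lsum)
    (C : ℝ) (hC : C = 8 * Lsum / μ)
    (p : Fin m → ℝ) (hp : ∀ i, p i = 1 / (2 * m) + L i / (2 * Lsum))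
    (S : ℝ) (hS : S = Real.sqrt (((m : ℝ) - 1) ^ 2 + 4 * m * C))
    (τ : ℝ) (hτ : τ = (S - ((m : ℝ) - 1)) / (2 * m))
    (η : ℝ) (hη : η = μ * (S + ((m : ℝ) - 1)) / 2)
    (α : ℝ) (hα : α = 1 - 1 / (((m : ℝ) + 1) + S)) :
    ((1 - α) * (1 + τ) = 1 / (2 * m) ∧ ∀ i, 1 / (2 * m) ≤ p i)
    ∧ ((1 - α) * η = (α - 1 / 2) * μ ∧ (α - 1 / 2) * μ ≤ α * μ)
    ∧ (η * τ = μ * C ∧ ∀ i, 4 * L i ≤ η * τ * p i) := by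
  have hm1 : (1:ℝ) ≤ (m:ℝ) := by exact_mod_cast hm
  have hmpos : (0:ℝ) < (m:ℝ) := by linarith
  have hCpos : 0 < C := by rw [hC]; positivity
  have harg : (0:ℝ) ≤ ((m : ℝ) - 1) ^ 2 + 4 * m * C := by positivity
  have hSnn : 0 ≤ S := hS ▸ Real.sqrt_nonneg _
  have hSsq : S ^ 2 = ((m : ℝ) - 1) ^ 2 + 4 * m * C := by
    rw [hS, Real.sq_sqrt harg]
  have hden : ((m : ℝ) + 1) + S ≠ 0 := by nlinarith
  have hmne : (m:ℝ) ≠ 0 := ne_of_gt hmpos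
  refine ⟨⟨?_, fun i => ?_⟩, ⟨?_, ?_⟩, ?_, fun i => ?_⟩
  · rw [hα, hτ]; field_simp; ring
  · rw [hp i]
    have : 0 ≤ L i / (2 * Lsum) := div_nonneg (hL i) (by linarith)
    linarith
  · rw [hα, hη]; field_simp; ring
  · have : α - 1 / 2 ≤ α := by linarith
    exact mul_le_mul_of_nonneg_right this hμ.le
  · rw [hη, hτ]; field_simp; nlinarith [hSsq]
  · have hητ : η * τ = μ * C := by rw [hη, hτ]; field_simp; nlinarith [hSsq]
    rw [hητ, hp i, hC]
    have hLi := hL i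
    have h1 : 8 * Lsum / μ * μ = 8 * Lsum := by field_simp
    have : μ * (8 * Lsum / μ) = 8 * Lsum := by field_simp
    rw [this]
    have h2 : 8 * Lsum * (1 / (2 * ↑m) + L i / (2 * Lsum)) = 4 * Lsum / m + 4 * L i := by
      field_simp; ring
    rw [h2]
    have : 0 ≤ 4 * Lsum / m := by positivity
    linarith
end

section
/- Theorem 3.4 (lower complexity bound for randomized incremental gradient methods): Let m ≥ 1, ñ ≥ 1, n = m·ñ, μ > 0, 𝒬 > 1, q = (√𝒬 − 1)/(√𝒬 + 1). Consider Ψ(x) = Σ_{i=1}^m [f_i(x_i) + (μ/2)‖x_i‖₂²] over x = (x_1, …, x_m) ∈ (ℝ^ñ)^m, with f_i(x_i) = (μ(𝒬−1)/4)·[½⟨A x_i, x_i⟩ − ⟨e₁, x_i⟩], A the tridiagonal matrix of (3.36) and x* its unique minimizer. Let i_1, i_2, … be independent random variables with values in {1, …, m} and P(i_t = i) = p_i (Σ p_i = 1, p_i ≥ 0), and let x^0 = 0 and x^k (k ≥ 1) be any random sequence adapted to i_1, …, i_k with x^k ∈ Lin{∇f_{i_1}(x^0), ∇f_{i_2}(x^1),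 …, ∇f_{i_k}(x^{k-1})} (each ∇f_{i_t} acting on the i_t-th block). Then for every k ≥ 1 and every choice of (p_i), if ñ ≥ log([1 − (1 − q²)/m]^k / 2) / (2·log q), one has E[‖x^k − x*‖₂²] / ‖x^0 − x*‖₂² ≥ ½·exp(−4k√𝒬 / (m(√𝒬+1)² − 4√𝒬)). -/
/-!
A gradient step of `f` at a vector supported on the first `a` coordinates is supported on the
first `a + 1` coordinates, because `A` is tridiagonal and `∇f(0)` is a multiple of `e₁`. Each
step acts on the sampled block only, so after `k` steps block `i` lives in the first
`#{t | i_t = i}` coordinates and its squared distance to `x*_i = (q, q², …)` is at least the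
geometric tail `∑_{j ≥ #{t | i_t = i}} q^{2(j+1)}`. The generating function of the number of
visits is `E[q^{2 #{t | i_t = i}}] = (1 - p_i (1 - q²))^k`, and by Jensen the sum over `i` is at
least `m ρ^k` with `ρ = 1 - (1 - q²)/m`, the worst case being uniform sampling. The dimension
condition says `q^{2ñ} ≤ ρ^k / 2`, which controls the truncation of the tail, and
`log ρ ≥ 1 - ρ⁻¹` turns `ρ^k` into the exponential.
-/

open scoped RealInnerProductSpace
open Finset

section Quadratic

variable {E : Type*} [NormedAddCommGroup E] [InnerProductSpace ℝ E] [CompleteSpace E]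

theorem hasGradientAt_const_mul_quadratic (c : ℝ) (T : E →L[ℝ] E)
    (hT : (T : E →ₗ[ℝ] E).IsSymmetric) (b v : E) :
    HasGradientAt (fun w => c * ((1 / 2) * ⟪T w, w⟫ - ⟪b, w⟫)) (c • (T v - b)) v := by
  rw [hasGradientAt_iff_hasFDerivAt]
  refine ((((T.hasFDerivAt.inner ℝ (hasFDerivAt_id v)).const_mul (1 / 2)).sub
    (innerSL ℝ b).hasFDerivAt).const_mul c).congr_fderiv ?_
  ext h
  have hTh : ⟪T h, v⟫ = ⟪T v, h⟫ := (hT h v).trans (real_inner_comm _ _)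
  simp only [smul_apply, sub_apply, ContinuousLinearMap.comp_apply, ContinuousLinearMap.prod_apply,
    ContinuousLinearMap.id_apply, fderivInnerCLM_apply, id_eq, hTh, smul_eq_mul,
    coe_innerSL_apply, map_smul, map_sub, InnerProductSpace.toDual_apply_apply]
  ring

end Quadratic

section Tridiagonal

variable {α : Type*} [Zero α] {n : ℕ} {A : Matrix (Fin n) (Fin n) α} {d : Fin n → α} {c : α}

theorem tridiagonal_isSymm
    (hA : ∀ i j : Fin n, A i j =
      if i = j then d i else if (i : ℕ) + 1 = (j : ℕ) ∨ (j : ℕ) + 1 = (i : ℕ) then c else 0) :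
    A.IsSymm := by
  refine Matrix.IsSymm.ext fun i j => ?_
  rw [hA, hA]
  by_cases h : i = j
  · subst h; rfl
  · simp [h, Ne.symm h, or_comm]

theorem tridiagonal_apply_eq_zero
    (hA : ∀ i j : Fin n, A i j =
      if i = j then d i else if (i : ℕ) + 1 = (j : ℕ) ∨ (j : ℕ) + 1 = (i : ℕ) then c else 0)
    (j l : Fin n) (hlj : (l : ℕ) + 1 < j) : A j l = 0 := by
  rw [hA, if_neg (by omega), if_neg (by omega)]

end Tridiagonal

section Geometric

theorem sum_Ico_pow_succ {r : ℝ} (hr : r ≠ 1) {a n : ℕ} (han : a ≤ n) :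
    ∑ j ∈ Ico a n, r ^ (j + 1) = r / (1 - r) * (r ^ a - r ^ n) := by
  have h1r : 1 - r ≠ 0 := sub_ne_zero.mpr (Ne.symm hr)
  rw [← geom_sum_Ico_mul_neg r han, Finset.sum_mul, Finset.mul_sum]
  refine Finset.sum_congr rfl fun j _ => ?_
  field_simp
  ring

theorem mul_pow_sub_pow_le_sum_Ico_pow_succ {r : ℝ} (hr0 : 0 ≤ r) (hr1 : r < 1) (a n : ℕ) :
    r / (1 - r) * (r ^ a - r ^ n) ≤ ∑ j ∈ Ico a n, r ^ (j + 1) := by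
  rcases le_or_gt a n with han | hna
  · exact (sum_Ico_pow_succ hr1.ne han).ge
  · rw [Finset.Ico_eq_empty (by omega), Finset.sum_empty]
    exact mul_nonpos_of_nonneg_of_nonpos (div_nonneg hr0 (by linarith))
      (sub_nonpos.mpr (pow_le_pow_of_le_one hr0 hr1.le hna.le))

theorem sum_filter_sq_pow_succ_eq_sum_Ico (q : ℝ) (n a : ℕ) :
    ∑ j : Fin n with a ≤ j.val, (q ^ (j.val + 1)) ^ 2 = ∑ j ∈ Ico a n, (q ^ 2) ^ (j + 1) := by
  rw [Finset.sum_filter,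
    Fin.sum_univ_eq_sum_range (fun j => if a ≤ j then (q ^ (j + 1)) ^ 2 else 0),
    ← Finset.sum_filter]
  exact Finset.sum_congr (by ext; simp [and_comm]) fun j _ => by ring

end Geometric

def headSubspace (n a : ℕ) : Submodule ℝ (EuclideanSpace ℝ (Fin n)) where
  carrier := {v | ∀ j : Fin n, a ≤ (j : ℕ) → v j = 0}
  add_mem' hv hw j hj := by simp [hv j hj, hw j hj]
  zero_mem' _ _ := rfl
  smul_mem' c v hv j hj := by simp [hv j hj]

section HeadSubspace

variable {n a : ℕ}

theorem headSubspace_mono : Monotone (headSubspace n) :=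
  fun _ _ hab _ hv j hj => hv j (hab.trans hj)

theorem toEuclideanLin_mem_headSubspace_succ {A : Matrix (Fin n) (Fin n) ℝ}
    (hA : ∀ j l : Fin n, (l : ℕ) + 1 < j → A j l = 0) {v : EuclideanSpace ℝ (Fin n)}
    (hv : v ∈ headSubspace n a) : Matrix.toEuclideanLin A v ∈ headSubspace n (a + 1) := by
  intro j hj
  simp only [Matrix.toLpLin_apply, PiLp.toLp_apply, Matrix.mulVec, dotProduct]
  refine Finset.sum_eq_zero fun l _ => ?_
  by_cases hl : a ≤ (l : ℕ)
  · simp [hv l hl]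
  · simp [hA j l (by omega)]

theorem smul_sub_mem_headSubspace_succ {A : Matrix (Fin n) (Fin n) ℝ}
    (hA : ∀ j l : Fin n, (l : ℕ) + 1 < j → A j l = 0) {b v : EuclideanSpace ℝ (Fin n)}
    (hb : b ∈ headSubspace n 1) (hv : v ∈ headSubspace n a) (c : ℝ) :
    c • (Matrix.toEuclideanLin A v - b) ∈ headSubspace n (a + 1) :=
  Submodule.smul_mem _ _ (Submodule.sub_mem _ (toEuclideanLin_mem_headSubspace_succ hA hv)
    (headSubspace_mono (by omega) hb))

theorem sum_sq_le_norm_sub_sq {v : EuclideanSpace ℝ (Fin n)} (hv : v ∈ headSubspace n a)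
    (w : EuclideanSpace ℝ (Fin n)) :
    ∑ j : Fin n with a ≤ j.val, w j ^ 2 ≤ ‖v - w‖ ^ 2 := by
  rw [EuclideanSpace.real_norm_sq_eq]
  refine (Finset.sum_congr rfl fun j hj => ?_).trans_le
    (Finset.sum_le_sum_of_subset_of_nonneg (Finset.filter_subset _ _) fun j _ _ => sq_nonneg _)
  simp [hv j (Finset.mem_filter.mp hj).2]

variable {q : ℝ} {w : EuclideanSpace ℝ (Fin n)}

theorem norm_sub_sq_ge_of_mem_headSubspace (hq : q ^ 2 < 1) (hw : ∀ j, w j = q ^ ((j : ℕ) + 1))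
    {v : EuclideanSpace ℝ (Fin n)} (hv : v ∈ headSubspace n a) :
    q ^ 2 / (1 - q ^ 2) * ((q ^ 2) ^ a - (q ^ 2) ^ n) ≤ ‖v - w‖ ^ 2 :=
  calc _ ≤ ∑ j ∈ Ico a n, (q ^ 2) ^ (j + 1) :=
        mul_pow_sub_pow_le_sum_Ico_pow_succ (sq_nonneg q) hq a n
    _ = ∑ j : Fin n with a ≤ j.val, w j ^ 2 := by
        simp only [hw, sum_filter_sq_pow_succ_eq_sum_Ico]
    _ ≤ ‖v - w‖ ^ 2 := sum_sq_le_norm_sub_sq hv w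

theorem norm_sq_of_apply_eq_pow_succ (hq : q ^ 2 ≠ 1) (hw : ∀ j, w j = q ^ ((j : ℕ) + 1)) :
    ‖w‖ ^ 2 = q ^ 2 / (1 - q ^ 2) * (1 - (q ^ 2) ^ n) := by
  have h := sum_Ico_pow_succ hq (Nat.zero_le n)
  rw [pow_zero] at h
  rw [EuclideanSpace.real_norm_sq_eq, ← h, ← sum_filter_sq_pow_succ_eq_sum_Ico]
  simp [hw]

end HeadSubspace

def visits {k m : ℕ} (s : Fin k → Fin m) (t : ℕ) (i : Fin m) : ℕ :=
  #{r : Fin k | (r : ℕ) < t ∧ s r = i}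

section Visits

variable {k m : ℕ} (s : Fin k → Fin m)

theorem visits_add_one_le {r : Fin k} {t : ℕ} (hrt : (r : ℕ) < t) :
    visits s r (s r) + 1 ≤ visits s t (s r) := by
  unfold visits
  rw [← Finset.card_insert_of_notMem (a := r) (by simp)]
  refine Finset.card_le_card fun l hl => ?_
  simp only [Finset.mem_insert, Finset.mem_filter, Finset.mem_univ, true_and] at hl ⊢
  rcases hl with rfl | hl
  · exact ⟨hrt, rfl⟩
  · exact ⟨hl.1.trans hrt, hl.2⟩

theorem visits_self (i : Fin m) : visits s k i = #{r | s r = i} := by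
  simp [visits]

theorem mem_pi_headSubspace_visits {n : ℕ}
    {g : EuclideanSpace ℝ (Fin n) → EuclideanSpace ℝ (Fin n)}
    (hg : ∀ a v, v ∈ headSubspace n a → g v ∈ headSubspace n (a + 1))
    (x : ℕ → Fin m → EuclideanSpace ℝ (Fin n)) (hx0 : x 0 = 0)
    (hspan : ∀ t : ℕ, 1 ≤ t → ∀ (ht : t ≤ k),
      x t ∈ Submodule.span ℝ
        {v : Fin m → EuclideanSpace ℝ (Fin n) |
          ∃ r : ℕ, ∃ (hr1 : 1 ≤ r) (hr2 : r ≤ t),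
            v = fun j => if j = s ⟨r - 1, by omega⟩
              then g (x (r - 1) (s ⟨r - 1, by omega⟩)) else 0})
    (t : ℕ) (htk : t ≤ k) :
    x t ∈ Submodule.pi Set.univ fun i => headSubspace n (visits s t i) := by
  induction t using Nat.strong_induction_on with
  | _ t ih =>
    rcases Nat.eq_zero_or_pos t with rfl | ht
    · rw [hx0]; exact zero_mem _
    refine Submodule.span_le.mpr ?_ (hspan t ht htk)
    rintro _ ⟨r, hr1, hrt, rfl⟩ i -
    dsimp only
    split_ifs with hi
    · subst hi
      have hprev := ih (r - 1) (by omega) (by omega) (s ⟨r - 1, by omega⟩) trivial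
      exact headSubspace_mono
        (visits_add_one_le s (r := ⟨r - 1, by omega⟩) (show r - 1 < t by omega)) (hg _ _ hprev)
    · exact zero_mem _

end Visits

section Sampling

theorem sum_prod_mul_pow_card_eq {ι : Type*} [Fintype ι] [DecidableEq ι] (k : ℕ) {p : ι → ℝ}
    (hp : ∑ j, p j = 1) (i : ι) (r : ℝ) :
    ∑ s : Fin k → ι, (∏ t, p (s t)) * r ^ #{t | s t = i} = (1 - p i * (1 - r)) ^ k := by
  have hmean : ∑ j, p j * (if j = i then r else 1) = 1 - p i * (1 - r) := by
    calc ∑ j, p j * (if j = i then r else 1)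
        = ∑ j, (p j - if j = i then p i * (1 - r) else 0) :=
          Finset.sum_congr rfl fun j _ => by
            split_ifs with h
            · rw [h]; ring
            · ring
      _ = 1 - p i * (1 - r) := by rw [Finset.sum_sub_distrib, hp, Finset.sum_ite_eq']; simp
  rw [← hmean, Fintype.sum_pow]
  refine Finset.sum_congr rfl fun s _ => ?_
  rw [Finset.prod_mul_distrib, Finset.prod_ite, Finset.prod_const_one, mul_one, Finset.prod_const]

theorem card_mul_mean_pow_le_sum_pow {ι : Type*} [Fintype ι] {z : ι → ℝ} (hz : ∀ i, 0 ≤ z i)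
    (k : ℕ) : Fintype.card ι * ((∑ i, z i) / Fintype.card ι) ^ k ≤ ∑ i, z i ^ k := by
  rcases isEmpty_or_nonempty ι with hι | hι
  · simp
  have := Real.pow_arith_mean_le_arith_mean_pow univ (fun _ => 1 / (Fintype.card ι : ℝ)) z
    (fun _ _ => by positivity) (by simp [Finset.card_univ]) (fun i _ => hz i) k
  rw [← Finset.mul_sum, ← Finset.mul_sum, one_div_mul_eq_div] at this
  calc _ ≤ (Fintype.card ι : ℝ) * (1 / Fintype.card ι * ∑ i, z i ^ k) := by gcongr
    _ = _ := by field_simp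

theorem card_mul_pow_le_sum_one_sub_mul_pow {m : ℕ} {p : Fin m → ℝ} (hp0 : ∀ i, 0 ≤ p i)
    (hp1 : ∑ i, p i = 1) {r : ℝ} (hr : 0 ≤ r) (k : ℕ) :
    m * (1 - (1 - r) / m) ^ k ≤ ∑ i, (1 - p i * (1 - r)) ^ k := by
  have hm : (m : ℝ) ≠ 0 := by
    rintro hm
    obtain rfl : m = 0 := by exact_mod_cast hm
    simp at hp1
  have hz : ∀ i, 0 ≤ 1 - p i * (1 - r) := fun i => by
    nlinarith [hp0 i, Finset.single_le_sum (fun j _ => hp0 j) (Finset.mem_univ i)]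
  have hsum : ∑ i, (1 - p i * (1 - r)) = m - (1 - r) := by
    simp [Finset.sum_sub_distrib, ← Finset.sum_mul, hp1]
  have h := card_mul_mean_pow_le_sum_pow hz k
  rwa [Fintype.card_fin, hsum, sub_div, div_self hm] at h

end Sampling

section Estimates

theorem le_one_sub_one_sub_div {r : ℝ} (hr : r ≤ 1) {m : ℕ} (hm : 1 ≤ m) :
    r ≤ 1 - (1 - r) / m := by
  linarith [div_le_self (sub_nonneg.mpr hr) (Nat.one_le_cast.mpr hm : (1 : ℝ) ≤ m)]

theorem one_sub_one_sub_div_le_one {r : ℝ} (hr : r ≤ 1) (m : ℕ) : 1 - (1 - r) / m ≤ 1 :=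
  sub_le_self _ (div_nonneg (sub_nonneg.mpr hr) m.cast_nonneg)

theorem pow_le_of_log_div_log_le {b y : ℝ} (hb0 : 0 < b) (hb1 : b < 1) (hy : 0 < y) {n : ℕ}
    (h : Real.log y / Real.log b ≤ n) : b ^ n ≤ y := by
  rw [div_le_iff_of_neg (Real.log_neg hb0 hb1), ← Real.log_pow] at h
  exact (Real.log_le_log_iff (pow_pos hb0 n) hy).mp h

theorem exp_neg_mul_div_sub_le_one_sub_div_pow {a b : ℝ} (ha : 0 ≤ a) (hab : a < b) (k : ℕ) :
    Real.exp (-(k * a) / (b - a)) ≤ (1 - a / b) ^ k := by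
  have hb : 0 < b := ha.trans_lt hab
  have hρ : 0 < 1 - a / b := by rw [sub_pos, div_lt_one hb]; exact hab
  have hinv : 1 - (1 - a / b)⁻¹ = -a / (b - a) := by
    field_simp
    rw [one_sub_div (by linarith)]
    ring
  calc Real.exp (-(k * a) / (b - a)) = Real.exp (1 - (1 - a / b)⁻¹) ^ k := by
        rw [← Real.exp_nat_mul, hinv]; ring_nf
    _ ≤ Real.exp (Real.log (1 - a / b)) ^ k := by
        gcongr; exact Real.one_sub_inv_le_log_of_pos hρ
    _ = (1 - a / b) ^ k := by rw [Real.exp_log hρ]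

theorem one_sub_sq_sub_one_div_add_one {s : ℝ} (hs : s + 1 ≠ 0) :
    1 - ((s - 1) / (s + 1)) ^ 2 = 4 * s / (s + 1) ^ 2 := by
  field_simp
  ring

theorem exp_le_one_sub_one_sub_sq_div_pow {s q : ℝ} (hs : 1 < s) (hq : q = (s - 1) / (s + 1))
    {m : ℕ} (hm : 1 ≤ m) (k : ℕ) :
    Real.exp (-(4 * k * s) / (m * (s + 1) ^ 2 - 4 * s)) ≤ (1 - (1 - q ^ 2) / m) ^ k := by
  have hm' : (1 : ℝ) ≤ m := by exact_mod_cast hm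
  have h := exp_neg_mul_div_sub_le_one_sub_div_pow (a := 4 * s) (b := m * (s + 1) ^ 2)
    (by positivity) (by nlinarith) k
  rw [hq, one_sub_sq_sub_one_div_add_one (by positivity), div_div, mul_comm _ (m : ℝ)]
  convert h using 3
  ring

end Estimates

section LowerBound

variable {n k m : ℕ} {p : Fin m → ℝ} {q : ℝ} {xstar : Fin m → EuclideanSpace ℝ (Fin n)}
  {y : (Fin k → Fin m) → Fin m → EuclideanSpace ℝ (Fin n)}

theorem expected_sq_dist_ge (hp0 : ∀ i, 0 ≤ p i) (hp1 : ∑ i, p i = 1) (hq : q ^ 2 < 1)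
    (hxstar : ∀ i j, xstar i j = q ^ ((j : ℕ) + 1))
    (hy : ∀ s i, y s i ∈ headSubspace n #{t | s t = i}) :
    m * (q ^ 2 / (1 - q ^ 2)) * ((1 - (1 - q ^ 2) / m) ^ k - (q ^ 2) ^ n)
      ≤ ∑ s, (∏ t, p (s t)) * ∑ i, ‖y s i - xstar i‖ ^ 2 := by
  set r := q ^ 2
  set C := r / (1 - r)
  have hC : 0 ≤ C := div_nonneg (sq_nonneg q) (by linarith)
  have hw : ∑ s : Fin k → Fin m, ∏ t, p (s t) = 1 := by rw [← Fintype.sum_pow, hp1, one_pow]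
  have hjensen := card_mul_pow_le_sum_one_sub_mul_pow hp0 hp1 (sq_nonneg q) k
  simp only [← sum_prod_mul_pow_card_eq k hp1] at hjensen
  calc m * C * ((1 - (1 - r) / m) ^ k - r ^ n)
      ≤ C * ∑ i, ∑ s : Fin k → Fin m, (∏ t, p (s t)) * r ^ #{t | s t = i} - m * C * r ^ n := by
        nlinarith
    _ = ∑ s : Fin k → Fin m, (∏ t, p (s t)) * ∑ i, C * (r ^ #{t | s t = i} - r ^ n) := by
        simp only [mul_sub, Finset.sum_sub_distrib, Finset.sum_const, Finset.card_univ,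
          Fintype.card_fin, nsmul_eq_mul, ← Finset.sum_mul, hw]
        simp only [Finset.mul_sum, one_mul]
        rw [Finset.sum_comm]
        congr 1
        · exact Finset.sum_congr rfl fun _ _ => Finset.sum_congr rfl fun _ _ => by ring
        · ring
    _ ≤ ∑ s : Fin k → Fin m, (∏ t, p (s t)) * ∑ i, ‖y s i - xstar i‖ ^ 2 := by
        gcongr with s _ i
        · exact Finset.prod_nonneg fun t _ => hp0 _
        · exact norm_sub_sq_ge_of_mem_headSubspace hq (hxstar i) (hy s i)

theorem half_pow_le_expected_sq_dist_div (hm : 1 ≤ m) (hp0 : ∀ i, 0 ≤ p i)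
    (hp1 : ∑ i, p i = 1) (hq0 : q ≠ 0) (hq : q ^ 2 < 1)
    (hxstar : ∀ i j, xstar i j = q ^ ((j : ℕ) + 1))
    (hy : ∀ s i, y s i ∈ headSubspace n #{t | s t = i})
    (hn : (q ^ 2) ^ n ≤ (1 - (1 - q ^ 2) / m) ^ k / 2) :
    (1 - (1 - q ^ 2) / m) ^ k / 2
      ≤ (∑ s, (∏ t, p (s t)) * ∑ i, ‖y s i - xstar i‖ ^ 2) / ∑ i, ‖xstar i‖ ^ 2 := by
  set ρ := 1 - (1 - q ^ 2) / m
  set C := q ^ 2 / (1 - q ^ 2)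
  have hρ1 : ρ ^ k ≤ 1 := pow_le_one₀ ((sq_nonneg q).trans (le_one_sub_one_sub_div hq.le hm))
    (one_sub_one_sub_div_le_one hq.le m)
  have hr0 : 0 ≤ (q ^ 2) ^ n := by positivity
  have hC : 0 < C := div_pos (by positivity) (by linarith)
  have hD : ∑ i, ‖xstar i‖ ^ 2 = m * C * (1 - (q ^ 2) ^ n) := by
    rw [Finset.sum_congr rfl fun i _ => norm_sq_of_apply_eq_pow_succ hq.ne (hxstar i),
      Finset.sum_const, Finset.card_univ, Fintype.card_fin, nsmul_eq_mul, mul_assoc]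
  rw [hD, le_div_iff₀ (mul_pos (by positivity) (by linarith))]
  calc ρ ^ k / 2 * (m * C * (1 - (q ^ 2) ^ n)) ≤ m * C * (ρ ^ k - (q ^ 2) ^ n) := by
        have hmC : 0 ≤ m * C := by positivity
        nlinarith [mul_nonneg hmC (by linarith : 0 ≤ ρ ^ k / 2 - (q ^ 2) ^ n),
          mul_nonneg (mul_nonneg hmC hr0) (by linarith : 0 ≤ ρ ^ k / 2)]
    _ ≤ _ := expected_sq_dist_ge hp0 hp1 hq hxstar hy

end LowerBound

/-- Theorem 3.4 (lower complexity bound for randomized incremental gradient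
methods).  The random indices `i_1, …, i_k` are modeled by the canonical
product space `s : Fin k → Fin m` with weight `∏ t, p (s t)`.  For the
worst-case separable quadratic instance with blocks `f_i`, any method whose
iterates satisfy `x^t ∈ Lin{∇f_{i_1}(x^0), …, ∇f_{i_t}(x^{t-1})}` (each
gradient acting on the sampled block) obeys
`E[‖x^k - x*‖₂²]/‖x^0 - x*‖₂² ≥ ½ exp(-4k√𝒬/(m(√𝒬+1)² - 4√𝒬))`
whenever `ñ ≥ log([1-(1-q²)/m]^k/2)/(2 log q)`. -/
theorem rig_lower_complexity_bound
    (m ntil k : ℕ) (hm : 1 ≤ m)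
    (μ Q : ℝ) (hQ : 1 < Q)
    (q κ : ℝ)
    (hq : q = (Real.sqrt Q - 1) / (Real.sqrt Q + 1))
    (A : Matrix (Fin ntil) (Fin ntil) ℝ)
    (hA : ∀ i j : Fin ntil, A i j =
      if i = j then (if (i : ℕ) = ntil - 1 then κ else 2)
      else if (i : ℕ) + 1 = (j : ℕ) ∨ (j : ℕ) + 1 = (i : ℕ) then -1 else 0)
    (e1 : EuclideanSpace ℝ (Fin ntil))
    (he1 : ∀ j : Fin ntil, e1 j = if (j : ℕ) = 0 then 1 else 0)
    (f : EuclideanSpace ℝ (Fin ntil) → ℝ)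
    (hf : ∀ v, f v = μ * (Q - 1) / 4 *
      ((1 / 2) * ⟪Matrix.toEuclideanLin A v, v⟫ - ⟪e1, v⟫))
    (f' : EuclideanSpace ℝ (Fin ntil) → EuclideanSpace ℝ (Fin ntil))
    (hf' : ∀ v, HasGradientAt f (f' v) v)
    (xstar : Fin m → EuclideanSpace ℝ (Fin ntil))
    (hxstar : ∀ i j, xstar i j = q ^ ((j : ℕ) + 1))
    (p : Fin m → ℝ) (hp0 : ∀ i, 0 ≤ p i) (hp1 : ∑ i, p i = 1)
    (x : (Fin k → Fin m) → ℕ → Fin m → EuclideanSpace ℝ (Fin ntil))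
    (hx0 : ∀ s, x s 0 = 0)
    (hspan : ∀ s : Fin k → Fin m, ∀ t : ℕ, ∀ (ht1 : 1 ≤ t) (ht2 : t ≤ k),
      x s t ∈ Submodule.span ℝ
        {v : Fin m → EuclideanSpace ℝ (Fin ntil) |
          ∃ r : ℕ, ∃ (hr1 : 1 ≤ r) (hr2 : r ≤ t),
            v = fun j => if j = s ⟨r - 1, by omega⟩
              then f' (x s (r - 1) (s ⟨r - 1, by omega⟩)) else 0})
    (hdim : Real.log ((1 - (1 - q ^ 2) / m) ^ k / 2) / (2 * Real.log q) ≤ (ntil : ℝ)) :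
    (1 / 2) * Real.exp (-(4 * k * Real.sqrt Q) /
        (m * (Real.sqrt Q + 1) ^ 2 - 4 * Real.sqrt Q))
      ≤ (∑ s : Fin k → Fin m, (∏ t, p (s t)) * ∑ i, ‖x s k i - xstar i‖ ^ 2)
          / (∑ i, ‖xstar i‖ ^ 2) := by
  have hsqrt : 1 < √Q := by rwa [Real.lt_sqrt zero_le_one, one_pow]
  have hq0 : 0 < q := by rw [hq]; exact div_pos (by linarith) (by linarith)
  have hq1 : q ^ 2 < 1 := by rw [hq, div_pow, div_lt_one (by positivity)]; nlinarith
  have hgrad : ∀ v, f' v = (μ * (Q - 1) / 4) • (Matrix.toEuclideanLin A v - e1) := fun v =>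
    (hf' v).unique <| by
      rw [funext hf]
      exact hasGradientAt_const_mul_quadratic _ (Matrix.toEuclideanCLM (n := Fin ntil) (𝕜 := ℝ) A)
        (Matrix.isSymmetric_toEuclideanLin_iff.mpr
          (Matrix.isHermitian_iff_isSymm.mpr (tridiagonal_isSymm hA))) e1 v
  have he1_mem : e1 ∈ headSubspace ntil 1 := fun j hj => by rw [he1, if_neg (by omega)]
  have hstep : ∀ a v, v ∈ headSubspace ntil a → f' v ∈ headSubspace ntil (a + 1) :=
    fun _ _ hv =>
      hgrad _ ▸ smul_sub_mem_headSubspace_succ (tridiagonal_apply_eq_zero hA) he1_mem hv _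
  have hsupp : ∀ s i, x s k i ∈ headSubspace ntil #{t | s t = i} := fun s i =>
    visits_self s i ▸ mem_pi_headSubspace_visits s hstep (x s) (hx0 s) (hspan s) k le_rfl i trivial
  have hN : (q ^ 2) ^ ntil ≤ (1 - (1 - q ^ 2) / m) ^ k / 2 := by
    have hρ := (pow_pos hq0 2).trans_le (le_one_sub_one_sub_div hq1.le hm)
    refine pow_le_of_log_div_log_le (by positivity) hq1 (div_pos (pow_pos hρ k) two_pos) ?_
    rwa [Real.log_pow, Nat.cast_ofNat]
  calc _ ≤ (1 - (1 - q ^ 2) / m) ^ k / 2 := by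
        rw [one_div_mul_eq_div]
        gcongr
        exact exp_le_one_sub_one_sub_sq_div_pow hsqrt hq hm k
    _ ≤ _ := half_pow_le_expected_sq_dist_div hm hp0 hp1 hq0.ne' hq1 hxstar hsupp hN
end

section
/- Lemma 5.8 (closed-form optimal solution of the worst-case instance): Let 𝒬 > 1, κ = (√𝒬 + 3)/(√𝒬 + 1), q = (√𝒬 − 1)/(√𝒬 + 1), and let A ∈ ℝ^{ñ×ñ} be the tridiagonal matrix with A_{jj} = 2 for j < ñ, A_{ññ} = κ, and A_{j,j+1} = A_{j+1,j} = −1. Then the vector v ∈ ℝ^ñ with entries v_j = q^j satisfies (A + (4/(𝒬−1))·I)·v = e₁; consequently, for μ > 0, the block vector x* with x*_{i,j} = q^j (i = 1, …, m; j = 1, …, ñ) is the unique optimal solution of min_{x} Σ_{i=1}^m [(μ(𝒬−1)/4)(½⟨A x_i, x_i⟩ − ⟨e₁, x_i⟩) + (μ/2)‖x_i‖₂²]. -/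
/-!
Put `β = 4 / (𝒬 - 1)`. Since `μ = (μ (𝒬 - 1) / 4) β`, every block of the objective is
`μ (𝒬 - 1) / 4 · (½ ⟨(A + β I) y, y⟩ - ⟨e₁, y⟩)`, and `A + β I` is positive definite because
`⟨A w, w⟩ = w₁² + Σₖ (w_{k+1} - w_k)² + (κ - 1) w_ñ²` with `κ ≥ 1`. Completing the square, each
block is uniquely minimised at the solution of `(A + β I) y = e₁`. Row by row, `y_j = q^j` solves
this system because `q² - (2 + β) q + 1 = 0` (interior rows) and `(κ + β) q = 1` (last row).
-/

open Matrix Finset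

lemma Matrix.PosDef.half_dotProduct_mulVec_sub_lt {ι : Type*} [Fintype ι] {M : Matrix ι ι ℝ}
    (hM : M.PosDef) {b v y : ι → ℝ} (hv : M *ᵥ v = b) (hy : y ≠ v) :
    v ⬝ᵥ M *ᵥ v / 2 - b ⬝ᵥ v < y ⬝ᵥ M *ᵥ y / 2 - b ⬝ᵥ y := by
  have hsymm : y ⬝ᵥ M *ᵥ v = v ⬝ᵥ M *ᵥ y := by
    have hT : Mᵀ = M := by
      simpa only [conjTranspose_eq_transpose_of_trivial] using hM.isHermitian.eq
    rw [dotProduct_mulVec, ← mulVec_transpose, hT, dotProduct_comm]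
  have hpos := hM.dotProduct_mulVec_pos (sub_ne_zero.mpr hy)
  rw [star_trivial, mulVec_sub, sub_dotProduct, dotProduct_sub, dotProduct_sub, hsymm] at hpos
  subst hv
  rw [dotProduct_comm (M *ᵥ v) y, dotProduct_comm (M *ᵥ v) v]
  linarith

lemma dotProduct_add_smul_one_mulVec {ι : Type*} [Fintype ι] [DecidableEq ι]
    (A : Matrix ι ι ℝ) (β : ℝ) (y : ι → ℝ) :
    y ⬝ᵥ (A + β • (1 : Matrix ι ι ℝ)) *ᵥ y = ∑ j, (A *ᵥ y) j * y j + β * ∑ j, y j ^ 2 := by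
  simp only [add_mulVec, smul_mulVec, one_mulVec, dotProduct, Pi.add_apply, Pi.smul_apply,
    smul_eq_mul, mul_add, sum_add_distrib, mul_sum]
  congr 1 <;> exact sum_congr rfl fun j _ => by ring

lemma sum_lt_sum_of_ne_const {ι α : Type*} [Fintype ι] {f : α → ℝ} {a : α}
    (hf : ∀ y, y ≠ a → f a < f y) {u : ι → α} (hu : u ≠ fun _ => a) :
    ∑ _i : ι, f a < ∑ i, f (u i) := by
  obtain ⟨i, hi⟩ := Function.ne_iff.mp hu
  refine sum_lt_sum (fun j _ => ?_) ⟨i, mem_univ i, hf _ hi⟩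
  rcases eq_or_ne (u j) a with h | h
  · rw [h]
  · exact (hf _ h).le

lemma sum_range_mul_second_difference (W : ℕ → ℝ) (h0 : W 0 = 0) (n : ℕ) :
    ∑ k ∈ range n, W (k + 1) * (2 * W (k + 1) - W (k + 2) - W k) =
      ∑ k ∈ range n, (W (k + 1) - W k) ^ 2 + W n ^ 2 - W (n + 1) * W n := by
  induction n with
  | zero => simp [h0]
  | succ n ih => rw [sum_range_succ, sum_range_succ, ih]; ring

/-- `w` indexed from `1` to `n` as in the paper, padded by `0` at index `0` and beyond `n`. -/
def oneIndexed {n : ℕ} (w : Fin n → ℝ) : ℕ → ℝ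
  | 0 => 0
  | t + 1 => if h : t < n then w ⟨t, h⟩ else 0

section OneIndexed

variable {n : ℕ} (w : Fin n → ℝ)

@[simp] lemma oneIndexed_zero : oneIndexed w 0 = 0 := rfl

@[simp] lemma oneIndexed_succ (j : Fin n) : oneIndexed w (j + 1) = w j := by
  simp [oneIndexed]

lemma oneIndexed_of_lt {t : ℕ} (ht : n < t) : oneIndexed w t = 0 := by
  obtain ⟨s, rfl⟩ : ∃ s, t = s + 1 := ⟨t - 1, by omega⟩
  simp [oneIndexed, show ¬s < n by omega]

lemma sum_ite_succ_eq_oneIndexed (t : ℕ) :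
    ∑ k : Fin n, (if (k : ℕ) + 1 = t then w k else 0) = oneIndexed w t := by
  rcases t with _ | s
  · simp
  · by_cases hs : s < n
    · simp only [Nat.add_right_cancel_iff, ← Fin.ext_iff (b := ⟨s, hs⟩), sum_ite_eq', mem_univ,
        if_true, oneIndexed, dif_pos hs]
    · simp only [oneIndexed, dif_neg hs]
      exact sum_eq_zero fun k _ => if_neg (by omega)

lemma oneIndexed_pow (q : ℝ) {t : ℕ} (ht : t ≤ n) :
    oneIndexed (fun j : Fin n => q ^ ((j : ℕ) + 1)) t = q ^ t - if t = 0 then 1 else 0 := by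
  rcases t with _ | s
  · simp
  · simp [oneIndexed, show s < n by omega]

end OneIndexed

def worstCaseMatrix (n : ℕ) (κ : ℝ) : Matrix (Fin n) (Fin n) ℝ :=
  Matrix.of fun i j => if i = j then (if (i : ℕ) = n - 1 then κ else 2)
    else if (i : ℕ) + 1 = (j : ℕ) ∨ (j : ℕ) + 1 = (i : ℕ) then -1 else 0

section WorstCaseMatrix

variable {n : ℕ}

lemma worstCaseMatrix_mulVec (κ : ℝ) (w : Fin n → ℝ) (j : Fin n) :
    (worstCaseMatrix n κ *ᵥ w) j = (if (j : ℕ) = n - 1 then κ else 2) * w j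
      - oneIndexed w (j + 2) - oneIndexed w j := by
  have hsplit : ∀ k, worstCaseMatrix n κ j k * w k =
      (if k = j then (if (j : ℕ) = n - 1 then κ else 2) * w k else 0)
      - (if (k : ℕ) + 1 = j + 2 then w k else 0) - (if (k : ℕ) + 1 = j then w k else 0) := by
    intro k
    simp only [worstCaseMatrix, of_apply, Fin.ext_iff]
    split_ifs <;> first | ring1 | omega
  simp only [mulVec, dotProduct, hsplit, sum_sub_distrib, sum_ite_eq', mem_univ, if_true,
    sum_ite_succ_eq_oneIndexed]

lemma worstCaseMatrix_isSymm (κ : ℝ) : (worstCaseMatrix n κ).IsSymm := by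
  refine IsSymm.ext fun i j => ?_
  simp only [worstCaseMatrix, of_apply, eq_comm (a := i), or_comm]
  split_ifs <;> simp_all

lemma worstCaseMatrix_dotProduct_mulVec (κ : ℝ) (w : Fin n → ℝ) :
    w ⬝ᵥ worstCaseMatrix n κ *ᵥ w = ∑ k ∈ range n, (oneIndexed w (k + 1) - oneIndexed w k) ^ 2
      + (κ - 1) * oneIndexed w n ^ 2 := by
  set W := oneIndexed w
  have hrow : ∀ t, W (t + 1) * ((if t = n - 1 then κ else 2) * W (t + 1) - W (t + 2) - W t) =
      W (t + 1) * (2 * W (t + 1) - W (t + 2) - W t)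
        + if t = n - 1 then (κ - 2) * W (t + 1) ^ 2 else 0 := by
    intro t; split_ifs <;> ring
  have hlast : ∑ t ∈ range n, (if t = n - 1 then (κ - 2) * W (t + 1) ^ 2 else 0) =
      (κ - 2) * W n ^ 2 := by
    rcases n with _ | p
    · simp [W]
    · simp
  have hW : W (n + 1) = 0 := oneIndexed_of_lt w (Nat.lt_succ_self n)
  calc w ⬝ᵥ worstCaseMatrix n κ *ᵥ w
      = ∑ t ∈ range n,
          W (t + 1) * ((if t = n - 1 then κ else 2) * W (t + 1) - W (t + 2) - W t) := by
        rw [← Fin.sum_univ_eq_sum_range]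
        simp only [dotProduct, worstCaseMatrix_mulVec, oneIndexed_succ, W]
    _ = _ := by
        rw [sum_congr rfl fun t _ => hrow t, sum_add_distrib, hlast,
          sum_range_mul_second_difference W (oneIndexed_zero w), hW]
        ring

lemma worstCaseMatrix_posSemidef {κ : ℝ} (hκ : 1 ≤ κ) : (worstCaseMatrix n κ).PosSemidef := by
  refine .of_dotProduct_mulVec_nonneg (worstCaseMatrix_isSymm κ) fun w => ?_
  rw [star_trivial, worstCaseMatrix_dotProduct_mulVec]
  have : 0 ≤ κ - 1 := by linarith
  positivity

lemma worstCaseMatrix_add_smul_one_mulVec_pow {κ β q : ℝ}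
    (hq : q ^ 2 + 1 = (2 + β) * q) (hκq : (κ + β) * q = 1) :
    (worstCaseMatrix n κ + β • (1 : Matrix (Fin n) (Fin n) ℝ)) *ᵥ
      (fun j : Fin n => q ^ ((j : ℕ) + 1)) = fun j : Fin n => if (j : ℕ) = 0 then 1 else 0 := by
  funext j
  rw [add_mulVec, smul_mulVec, one_mulVec, Pi.add_apply, Pi.smul_apply, smul_eq_mul,
    worstCaseMatrix_mulVec, oneIndexed_pow q (by omega : (j : ℕ) ≤ n)]
  by_cases hlast : (j : ℕ) = n - 1
  · rw [if_pos hlast, oneIndexed_of_lt _ (by omega)]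
    linear_combination q ^ (j : ℕ) * hκq
  · rw [if_neg hlast, oneIndexed_pow q (by omega), if_neg (by omega)]
    linear_combination -q ^ (j : ℕ) * hq

end WorstCaseMatrix

lemma one_le_worstCase_kappa (Q : ℝ) : 1 ≤ (√Q + 3) / (√Q + 1) := by
  rw [one_le_div (by positivity)]
  linarith

lemma worstCase_q_sq_add_one {Q : ℝ} (hQ : 1 < Q) :
    ((√Q - 1) / (√Q + 1)) ^ 2 + 1 = (2 + 4 / (Q - 1)) * ((√Q - 1) / (√Q + 1)) := by
  obtain ⟨s, hs, rfl⟩ : ∃ s, 1 < s ∧ Q = s ^ 2 :=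
    ⟨√Q, Real.lt_sqrt_of_sq_lt (by linarith), (Real.sq_sqrt (by linarith)).symm⟩
  have : s ^ 2 - 1 ≠ 0 := by nlinarith
  rw [Real.sqrt_sq (by linarith)]
  field_simp
  ring

lemma worstCase_kappa_add_mul_q {Q : ℝ} (hQ : 1 < Q) :
    ((√Q + 3) / (√Q + 1) + 4 / (Q - 1)) * ((√Q - 1) / (√Q + 1)) = 1 := by
  obtain ⟨s, hs, rfl⟩ : ∃ s, 1 < s ∧ Q = s ^ 2 :=
    ⟨√Q, Real.lt_sqrt_of_sq_lt (by linarith), (Real.sq_sqrt (by linarith)).symm⟩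
  have : s ^ 2 - 1 ≠ 0 := by nlinarith
  rw [Real.sqrt_sq (by linarith)]
  field_simp
  ring

theorem worst_case_optimal_solution_general
    (ntil m : ℕ)
    (Q μ : ℝ) (hQ : 1 < Q) (hμ : 0 < μ)
    (κ q : ℝ)
    (hκ : κ = (Real.sqrt Q + 3) / (Real.sqrt Q + 1))
    (hq : q = (Real.sqrt Q - 1) / (Real.sqrt Q + 1))
    (A : Matrix (Fin ntil) (Fin ntil) ℝ)
    (hA : ∀ i j : Fin ntil, A i j =
      if i = j then (if (i : ℕ) = ntil - 1 then κ else 2)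
      else if (i : ℕ) + 1 = (j : ℕ) ∨ (j : ℕ) + 1 = (i : ℕ) then -1 else 0)
    (e1 : Fin ntil → ℝ) (he1 : ∀ j : Fin ntil, e1 j = if (j : ℕ) = 0 then 1 else 0)
    (v : Fin ntil → ℝ) (hv : ∀ j, v j = q ^ ((j : ℕ) + 1))
    (Φ : (Fin m → Fin ntil → ℝ) → ℝ)
    (hΦ : ∀ x, Φ x = ∑ i, (μ * (Q - 1) / 4 *
        ((1 / 2) * ∑ j, A.mulVec (x i) j * x i j - ∑ j, e1 j * x i j)
      + μ / 2 * ∑ j, (x i j) ^ 2))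
    (xstar : Fin m → Fin ntil → ℝ) (hxstar : ∀ i j, xstar i j = q ^ ((j : ℕ) + 1)) :
    (A + (4 / (Q - 1)) • (1 : Matrix (Fin ntil) (Fin ntil) ℝ)).mulVec v = e1
    ∧ (∀ u, Φ xstar ≤ Φ u)
    ∧ (∀ u, u ≠ xstar → Φ xstar < Φ u) := by
  obtain rfl : A = worstCaseMatrix ntil κ := Matrix.ext hA
  obtain rfl : xstar = fun _ => v := funext₂ fun i j => (hxstar i j).trans (hv j).symm
  have hQ1 : 0 < Q - 1 := sub_pos.mpr hQ
  set M := worstCaseMatrix ntil κ + (4 / (Q - 1)) • (1 : Matrix (Fin ntil) (Fin ntil) ℝ)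
  set c := μ * (Q - 1) / 4
  have hstat : M *ᵥ v = e1 := by
    rw [funext hv, funext he1, hq]
    exact worstCaseMatrix_add_smul_one_mulVec_pow (worstCase_q_sq_add_one hQ)
      (hκ ▸ worstCase_kappa_add_mul_q hQ)
  have hM : M.PosDef := PosDef.posSemidef_add
    (worstCaseMatrix_posSemidef (hκ ▸ one_le_worstCase_kappa Q)) (PosDef.one.smul (by positivity))
  have hΦM : ∀ x, Φ x = ∑ i, c * (x i ⬝ᵥ M *ᵥ x i / 2 - e1 ⬝ᵥ x i) := fun x => by
    rw [hΦ]
    refine sum_congr rfl fun i _ => ?_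
    rw [dotProduct_add_smul_one_mulVec]
    field_simp
    simp only [dotProduct, c]
    ring
  have hstrict : ∀ u, u ≠ (fun _ => v) → Φ (fun _ => v) < Φ u := fun u hu => by
    simpa only [hΦM] using sum_lt_sum_of_ne_const (f := fun y => c * (y ⬝ᵥ M *ᵥ y / 2 - e1 ⬝ᵥ y))
      (fun y hy => mul_lt_mul_of_pos_left (hM.half_dotProduct_mulVec_sub_lt hstat hy)
        (by positivity)) hu
  exact ⟨hstat, fun u => (eq_or_ne u _).elim (fun h => h ▸ le_rfl) (fun h => (hstrict u h).le),
    hstrict⟩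

/-- Lemma 5.8 (closed-form optimal solution of the worst-case instance):
the vector `v` with `v_j = q^j` solves `(A + (4/(𝒬-1)) I) v = e₁`, and the
block vector with entries `q^j` in each block is the unique optimal solution
of the worst-case separable quadratic problem. -/
theorem worst_case_optimal_solution
    (ntil m : ℕ) (hn : 1 ≤ ntil) (hm : 1 ≤ m)
    (Q μ : ℝ) (hQ : 1 < Q) (hμ : 0 < μ)
    (κ q : ℝ)
    (hκ : κ = (Real.sqrt Q + 3) / (Real.sqrt Q + 1))
    (hq : q = (Real.sqrt Q - 1) / (Real.sqrt Q + 1))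
    (A : Matrix (Fin ntil) (Fin ntil) ℝ)
    (hA : ∀ i j : Fin ntil, A i j =
      if i = j then (if (i : ℕ) = ntil - 1 then κ else 2)
      else if (i : ℕ) + 1 = (j : ℕ) ∨ (j : ℕ) + 1 = (i : ℕ) then -1 else 0)
    (e1 : Fin ntil → ℝ) (he1 : ∀ j : Fin ntil, e1 j = if (j : ℕ) = 0 then 1 else 0)
    (v : Fin ntil → ℝ) (hv : ∀ j, v j = q ^ ((j : ℕ) + 1))
    (Φ : (Fin m → Fin ntil → ℝ) → ℝ)
    (hΦ : ∀ x, Φ x = ∑ i, (μ * (Q - 1) / 4 *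
        ((1 / 2) * ∑ j, A.mulVec (x i) j * x i j - ∑ j, e1 j * x i j)
      + μ / 2 * ∑ j, (x i j) ^ 2))
    (xstar : Fin m → Fin ntil → ℝ) (hxstar : ∀ i j, xstar i j = q ^ ((j : ℕ) + 1)) :
    (A + (4 / (Q - 1)) • (1 : Matrix (Fin ntil) (Fin ntil) ℝ)).mulVec v = e1
    ∧ (∀ u, Φ xstar ≤ Φ u)
    ∧ (∀ u, u ≠ xstar → Φ xstar < Φ u) :=
  worst_case_optimal_solution_general ntil m Q μ hQ hμ κ q hκ hq A hA e1 he1 v hv Φ hΦ xstar hxstar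
end
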